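/- arXiv:1809.05974 — 4 statements merged into one kernel-verified Lean document; each statement's English description precedes it below -/
import Mathlib

section
/- Let G be a graph with 7 ≤ |V(G)| ≤ 11 and minimum degree at least 6. If G is not 5-connected, then G contains K_5 minus one edge as a subgraph. -/
open SimpleGraph

/-- The complete 5-partite graph `K_{2,2,2,2,2}`. -/
abbrev K22222 : SimpleGraph (Σ _ : Fin 5, Fin 2) :=
  SimpleGraph.completeMultipartiteGraph fun _ => Fin 2

/-- An `(H₁, H₂, k)`-cockade: any graph isomorphic to `H₁` or `H₂` is one, and identifying
cliques of size `k` in two cockades yields one (expressed via a decomposition of the glued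
graph into the two overlapping pieces). -/
inductive IsCockade {α β : Type} (H₁ : SimpleGraph α) (H₂ : SimpleGraph β) (k : ℕ) :
    {V : Type} → SimpleGraph V → Prop
  | base₁ {V : Type} (G : SimpleGraph V) : Nonempty (G ≃g H₁) → IsCockade H₁ H₂ k G
  | base₂ {V : Type} (G : SimpleGraph V) : Nonempty (G ≃g H₂) → IsCockade H₁ H₂ k G
  | glue {V : Type} (G : SimpleGraph V) (A B : Set V) :
      A ∪ B = Set.univ → ¬ A ⊆ B → ¬ B ⊆ A →
      (A ∩ B).ncard = k → G.IsClique (A ∩ B) →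
      (∀ u ∈ A \ B, ∀ v ∈ B \ A, ¬ G.Adj u v) →
      IsCockade H₁ H₂ k (G.induce A) → IsCockade H₁ H₂ k (G.induce B) →
      IsCockade H₁ H₂ k G

/-- A `(K₈, K_{2,2,2,2,2}, 5)`-cockade. -/
abbrev Cockade85 {V : Type} (G : SimpleGraph V) : Prop :=
  IsCockade (⊤ : SimpleGraph (Fin 8)) K22222 5 G

/-- `H` is a minor of `G`, via branch sets. -/
def IsMinorOf {W V : Type} (H : SimpleGraph W) (G : SimpleGraph V) : Prop :=
  ∃ B : W → Set V,
    (∀ w, (B w).Nonempty) ∧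
    (∀ w, (G.induce (B w)).Connected) ∧
    (Pairwise fun w₁ w₂ => Disjoint (B w₁) (B w₂)) ∧
    (∀ w₁ w₂, H.Adj w₁ w₂ → ∃ u ∈ B w₁, ∃ v ∈ B w₂, G.Adj u v)

/-- `G` contains `K_t` minus two edges as a minor (either of the two nonisomorphic graphs). -/
def HasKEqMinor (t : ℕ) {V : Type} (G : SimpleGraph V) : Prop :=
  ∃ e₁ e₂ : Sym2 (Fin t), e₁ ≠ e₂ ∧ ¬ e₁.IsDiag ∧ ¬ e₂.IsDiag ∧
    IsMinorOf ((⊤ : SimpleGraph (Fin t)).deleteEdges {e₁, e₂}) G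


/-- Add to `G` a new vertex (the `none` vertex) adjacent exactly to the vertices in `N`. -/
def addVertex {V : Type} (G : SimpleGraph V) (N : Set V) : SimpleGraph (Option V) where
  Adj a b :=
    match a, b with
    | some u, some w => G.Adj u w
    | some u, none => u ∈ N
    | none, some w => w ∈ N
    | none, none => False
  symm := ⟨by rintro (_ | u) (_ | w) h <;> first | exact h | exact h.symm⟩
  loopless := ⟨by
    rintro (_ | u) h
    · exact h
    · exact G.irrefl h⟩

/-- The graph obtained from `G` by contracting the edge `xy` (the merged vertex is `x`,
and `y` is deleted). -/
def contractEdge {V : Type} (G : SimpleGraph V) (x y : V) :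
    SimpleGraph {z : V // z ≠ y} where
  Adj a b := a ≠ b ∧
    (G.Adj a b ∨ ((a : V) = x ∧ G.Adj y b) ∨ ((b : V) = x ∧ G.Adj y a))
  symm := ⟨by
    rintro a b ⟨hne, h⟩
    refine ⟨hne.symm, ?_⟩
    rcases h with h | ⟨h1, h2⟩ | ⟨h1, h2⟩
    · exact Or.inl h.symm
    · exact Or.inr (Or.inr ⟨h1, h2⟩)
    · exact Or.inr (Or.inl ⟨h1, h2⟩)⟩
  loopless := ⟨fun a h => h.1 rfl⟩

/-- The join of two graphs. -/
def joinGraph {α β : Type} (G : SimpleGraph α) (H : SimpleGraph β) : SimpleGraph (α ⊕ β) where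
  Adj a b :=
    match a, b with
    | .inl a, .inl b => G.Adj a b
    | .inr a, .inr b => H.Adj a b
    | .inl _, .inr _ => True
    | .inr _, .inl _ => True
  symm := ⟨by rintro (a | a) (b | b) h <;> first | exact h.symm | trivial⟩
  loopless := ⟨by rintro (a | a) h; exacts [G.irrefl h, H.irrefl h]⟩

/-- The disjoint union of two graphs. -/
def disjUnionGraph {α β : Type} (G : SimpleGraph α) (H : SimpleGraph β) :
    SimpleGraph (α ⊕ β) where
  Adj a b :=
    match a, b with
    | .inl a, .inl b => G.Adj a b
    | .inr a, .inr b => H.Adj a b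
    | .inl _, .inr _ => False
    | .inr _, .inl _ => False
  symm := ⟨by rintro (a | a) (b | b) h <;> first | exact h.symm | exact h⟩
  loopless := ⟨by rintro (a | a) h; exacts [G.irrefl h, H.irrefl h]⟩

/-- The cycle graph `C_n` on `ZMod n`. -/
def cycleG (n : ℕ) [NeZero n] : SimpleGraph (ZMod n) :=
  SimpleGraph.fromRel fun i j => i - j = 1

/-- The Petersen graph, as the Kneser graph on 2-element subsets of a 5-element set. -/
def petersen : SimpleGraph {s : Finset (Fin 5) // s.card = 2} where
  Adj a b := Disjoint a.1 b.1
  symm := ⟨fun _ _ h => h.symm⟩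
  loopless := ⟨by
    intro a h
    have h2 := a.2
    rw [disjoint_self.mp h] at h2
    simp at h2⟩

/-- `G` is `k`-connected: more than `k` vertices, and removing fewer than `k` vertices
leaves a connected graph. -/
def IsKConnected {V : Type} [Fintype V] (k : ℕ) (G : SimpleGraph V) : Prop :=
  k < Fintype.card V ∧ ∀ S : Set V, S.ncard < k → (G.induce Sᶜ).Connected

/-- `G - v` has a `K₄` minor rooted at the 4-element set `T` (with `v ∉ T`): four disjoint
branch sets avoiding `v`, each inducing a connected subgraph, each meeting `T` in exactly
one vertex, and pairwise joined by an edge. -/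
def HasRootedK4MinorAvoiding {V : Type} (G : SimpleGraph V) (T : Set V) (v : V) : Prop :=
  ∃ (t : Fin 4 → V) (B : Fin 4 → Set V),
    Function.Injective t ∧ Set.range t = T ∧
    (∀ i, v ∉ B i) ∧ (∀ i, B i ∩ T = {t i}) ∧
    (∀ i, (G.induce (B i)).Connected) ∧
    (Pairwise fun i j => Disjoint (B i) (B j)) ∧
    (Pairwise fun i j => ∃ a ∈ B i, ∃ b ∈ B j, G.Adj a b)

/-!
Let `S`, `|S| ≤ 4`, separate `G`. A vertex of a component `C` of `G - S` has its at least six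
neighbours in `C ∪ S`, so `|C| + |S| ≥ 7`. Two disjoint components and `|V| ≤ 11` force
`|S| ≥ 3` and a component with `|C| + |S| = 7`; each vertex of that `C` is then adjacent to all
other vertices of `C ∪ S`. Three vertices of `C` and two more vertices of `C ∪ S` span a `K₅`
missing at most the edge between the last two.
-/

namespace SimpleGraph

variable {V : Type*} (G : SimpleGraph V)

def ContainsK5Minus : Prop :=
  ∃ s : Finset V, s.card = 5 ∧ ∃ e : Sym2 V,
    ∀ u ∈ s, ∀ v ∈ s, u ≠ v → s(u, v) ≠ e → G.Adj u v

theorem containsK5Minus_of_subset_of_forall_adj {K W : Set V} (hKW : K ⊆ W) (hK : 3 ≤ K.ncard)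
    (hW : 5 ≤ W.ncard) (hadj : ∀ v ∈ K, ∀ w ∈ W, v ≠ w → G.Adj v w) :
    G.ContainsK5Minus := by
  classical
  have hWfin : W.Finite := Set.finite_of_ncard_pos (by omega)
  obtain ⟨T, hTK, hT⟩ := Set.exists_subset_card_eq hK
  have hTW : T ⊆ W := hTK.trans hKW
  have hTfin : T.Finite := hWfin.subset hTW
  obtain ⟨R, hRW, hR⟩ := Set.exists_subset_card_eq (s := W \ T) (n := 2) (by
    rw [Set.ncard_sdiff hTW hTfin]; omega)
  obtain ⟨a, b, -, rfl⟩ := Set.ncard_eq_two.mp hR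
  have hdisj : Disjoint T {a, b} := Set.disjoint_of_subset_right hRW Set.disjoint_sdiff_right
  refine ⟨(hTfin.union (Set.toFinite {a, b})).toFinset, ?_, s(a, b), ?_⟩
  · rw [← Set.ncard_eq_toFinset_card _ (hTfin.union (Set.toFinite _)),
      Set.ncard_union_eq hdisj hTfin, hT, hR]
  · intro u hu v hv huv he
    simp only [Set.Finite.mem_toFinset, Set.mem_union] at hu hv
    have hab : ({a, b} : Set V) ⊆ W := fun x hx => (hRW hx).1
    rcases hu with hu | hu
    · exact hadj u (hTK hu) v (hv.elim (fun h => hTW h) (fun h => hab h)) huv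
    rcases hv with hv | hv
    · exact (hadj v (hTK hv) u (hab hu) huv.symm).symm
    simp only [Set.mem_insert_iff, Set.mem_singleton_iff] at hu hv
    rcases hu with rfl | rfl <;> rcases hv with rfl | rfl <;> simp_all [Sym2.eq_swap]

theorem ncard_neighborSet_lt {X : Set V} (hX : X.Finite) {v : V} (hv : v ∈ X)
    (hN : G.neighborSet v ⊆ X) : (G.neighborSet v).ncard < X.ncard :=
  Set.ncard_lt_ncard ((Set.ssubset_iff_of_subset hN).mpr ⟨v, hv, G.irrefl⟩) hX

theorem adj_of_ncard_le_ncard_neighborSet_add_one {X : Set V} (hX : X.Finite) {v w : V}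
    (hv : v ∈ X) (hN : G.neighborSet v ⊆ X) (hcard : X.ncard ≤ (G.neighborSet v).ncard + 1)
    (hw : w ∈ X) (hvw : v ≠ w) : G.Adj v w := by
  have hsub : G.neighborSet v ⊆ X \ {v} := fun x hx =>
    ⟨hN hx, fun h => G.irrefl (by rwa [Set.mem_singleton_iff.mp h] at hx)⟩
  have hcard' : (X \ {v}).ncard ≤ (G.neighborSet v).ncard := by
    rw [Set.ncard_sdiff_singleton_of_mem hv]; omega
  have heq := Set.eq_of_subset_of_ncard_le hsub hcard' hX.sdiff
  show w ∈ G.neighborSet v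
  rw [heq]
  exact ⟨hw, hvw.symm⟩

section Separation

variable {G} {S : Set V}

theorem neighborSet_subset_image_supp_union (c : (G.induce Sᶜ).ConnectedComponent) {v : V}
    (hv : v ∈ Subtype.val '' c.supp) : G.neighborSet v ⊆ Subtype.val '' c.supp ∪ S := by
  obtain ⟨v, hvc, rfl⟩ := hv
  intro w hw
  by_cases hwS : w ∈ S
  · exact Or.inr hwS
  · exact Or.inl
      ⟨⟨w, hwS⟩, (c.mem_supp_congr_adj (v := v) (w := ⟨w, hwS⟩) hw).mp hvc, rfl⟩

theorem disjoint_image_supp (c : (G.induce Sᶜ).ConnectedComponent) :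
    Disjoint (Subtype.val '' c.supp) S := by
  rw [Set.disjoint_left]
  rintro _ ⟨v, -, rfl⟩
  exact v.2

theorem disjoint_image_supp_of_ne {c₁ c₂ : (G.induce Sᶜ).ConnectedComponent}
    (h : c₁ ≠ c₂) :
    Disjoint (Subtype.val '' c₁.supp) (Subtype.val '' c₂.supp) :=
  (Set.disjoint_image_iff Subtype.val_injective).mpr
    (pairwise_disjoint_supp_connectedComponent _ h)

theorem add_one_le_ncard_image_supp_union [Finite V] {d : ℕ}
    (hdeg : ∀ v : V, d ≤ (G.neighborSet v).ncard) (c : (G.induce Sᶜ).ConnectedComponent) :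
    d + 1 ≤ (Subtype.val '' c.supp ∪ S).ncard := by
  obtain ⟨v, hv⟩ := c.nonempty_supp
  have hv' : (v : V) ∈ Subtype.val '' c.supp ∪ S := Or.inl ⟨v, hv, rfl⟩
  exact (hdeg v).trans_lt (G.ncard_neighborSet_lt (Set.toFinite _) hv'
    (neighborSet_subset_image_supp_union c ⟨v, hv, rfl⟩))

end Separation

theorem exists_ne_connectedComponent_of_not_isKConnected {V : Type} [Fintype V] {k : ℕ}
    {G : SimpleGraph V} (hnc : ¬ IsKConnected k G) (hk : k < Fintype.card V) :
    ∃ S : Set V, S.ncard < k ∧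
      ∃ c₁ c₂ : (G.induce Sᶜ).ConnectedComponent, c₁ ≠ c₂ := by
  simp only [IsKConnected, hk, true_and, not_forall] at hnc
  obtain ⟨S, hS, hdisc⟩ := hnc
  refine ⟨S, hS, ?_⟩
  by_contra! hall
  have : Nonempty ↥Sᶜ := by
    refine (Set.nonempty_of_ncard_ne_zero ?_).to_subtype
    have := Set.ncard_add_ncard_compl S
    rw [Nat.card_eq_fintype_card] at this
    omega
  exact hdisc ⟨fun a b => ConnectedComponent.exact (hall _ _)⟩

end SimpleGraph

theorem not_five_connected_K5_minus {V : Type} [Fintype V] (G : SimpleGraph V)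
    (h7 : 7 ≤ Fintype.card V) (h11 : Fintype.card V ≤ 11)
    (hdeg : ∀ v : V, 6 ≤ (G.neighborSet v).ncard)
    (hnc : ¬ IsKConnected 5 G) :
    ∃ s : Finset V, s.card = 5 ∧ ∃ e : Sym2 V,
      ∀ u ∈ s, ∀ v ∈ s, u ≠ v → s(u, v) ≠ e → G.Adj u v := by
  obtain ⟨S, hS, c₁, c₂, hne⟩ :=
    exists_ne_connectedComponent_of_not_isKConnected hnc (by omega)
  have hsize (c : (G.induce Sᶜ).ConnectedComponent) :=
    Set.ncard_union_eq (disjoint_image_supp c) (Set.toFinite _) (Set.toFinite _)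
  have h₁ := add_one_le_ncard_image_supp_union hdeg c₁
  have h₂ := add_one_le_ncard_image_supp_union hdeg c₂
  have htotal : (Subtype.val '' c₁.supp ∪ Subtype.val '' c₂.supp ∪ S).ncard ≤ 11 :=
    (Set.ncard_le_card _).trans (by rwa [Nat.card_eq_fintype_card])
  rw [Set.ncard_union_eq (Set.disjoint_union_left.mpr
      ⟨disjoint_image_supp c₁, disjoint_image_supp c₂⟩) (Set.toFinite _) (Set.toFinite _),
    Set.ncard_union_eq (disjoint_image_supp_of_ne hne) (Set.toFinite _) (Set.toFinite _)]
    at htotal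
  obtain ⟨c, hc7, hc3⟩ : ∃ c : (G.induce Sᶜ).ConnectedComponent,
      (Subtype.val '' c.supp ∪ S).ncard ≤ 7 ∧ 3 ≤ (Subtype.val '' c.supp).ncard := by
    rw [hsize] at h₁ h₂
    by_cases h : (Subtype.val '' c₁.supp).ncard + S.ncard ≤ 7
    · exact ⟨c₁, by rw [hsize]; omega, by omega⟩
    · exact ⟨c₂, by rw [hsize]; omega, by omega⟩
  refine G.containsK5Minus_of_subset_of_forall_adj Set.subset_union_left hc3
    ((add_one_le_ncard_image_supp_union hdeg c).trans' (by norm_num))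
    fun v hv w hw hvw => G.adj_of_ncard_le_ncard_neighborSet_add_one (Set.toFinite _)
      (Or.inl hv) (neighborSet_subset_image_supp_union c hv) ?_ hw hvw
  exact hc7.trans (by have := hdeg v; omega)
end

section
/- Let G be a graph with 7 ≤ |V(G)| ≤ 11 and minimum degree at least 6 such that G is 4-connected but not 5-connected. Then for any set T of 5 vertices of G, there exists v ∈ T such that G - v has a K_4 minor rooted at T \ {v}. -/
open SimpleGraph

/-!
A separator `S` of minimum size has four vertices. Every vertex has at least six neighbours, all
in its own side or in `S`, so each side has at least three vertices; as `|V| ≤ 11`, one side `A`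
has exactly three and the other side `B` at most four. Hence `A` is complete to `A ∪ S`, and each
vertex of `B` misses at most one vertex of `B ∪ S`.

Delete a vertex `v ∈ T` outside `A`, chosen in `B` if possible. A root `r` gets the branch set
made of `r`, a private neighbour in `S \ T` if `r ∈ B` (Hall's theorem), and a private vertex of
`A \ T` unless `r ∈ A` or `r` is one exceptional root. Every branch set meets `A ∪ S` and all
but one meet `A`, so they are pairwise adjacent. Hall's condition fails only if `T` avoids `A`
and the roots in `B` all miss one `s ∈ S \ T`; then those roots see every other root, and the
roots in `S` get private vertices of `A`.
-/

open Finset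

theorem Set.pairwise_disjoint_insert {α : Type*} {R T : Set α} {E : α → Set α} (hRT : R ⊆ T)
    (hET : ∀ r ∈ R, Disjoint (E r) T) (hE : R.Pairwise fun r r' => Disjoint (E r) (E r')) :
    R.Pairwise fun r r' => Disjoint (insert r (E r)) (insert r' (E r')) := by
  intro r hr r' hr' hne
  refine Set.disjoint_insert_left.2 ⟨?_, Set.disjoint_insert_right.2 ⟨?_, hE hr hr' hne⟩⟩
  · rintro (h | h)
    · exact hne h
    · exact Set.disjoint_left.1 (hET r' hr') h (hRT hr)
  · exact fun h => Set.disjoint_left.1 (hET r hr) h (hRT hr')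

theorem Finset.exists_mapsTo_injOn_of_card_le {α β : Type*} [Nonempty β] {s : Finset α}
    {t : Finset β} (h : #s ≤ #t) : ∃ f : α → β, Set.MapsTo f s t ∧ Set.InjOn f s := by
  have h' : (s : Set α).encard ≤ (t : Set β).encard := by simpa using h
  exact s.finite_toSet.exists_injOn_of_encard_le h'

theorem Finset.exists_mapsTo_injOn_of_forall_or {ι α : Type*} [DecidableEq α] [Nonempty α]
    (r : ι → α → Prop) {R : Finset ι} {P : Finset α}
    (hr : ∀ i ∈ R, ∀ x ∈ P, ∀ y ∈ P, x ≠ y → r i x ∨ r i y) (hle : #R ≤ #P)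
    (hcover : #R = #P → ∀ x ∈ P, ∃ i ∈ R, r i x) :
    ∃ f : ι → α, Set.MapsTo f R P ∧ Set.InjOn f R ∧ ∀ i ∈ R, r i (f i) := by
  classical
  let t : R → Finset α := fun i => P.filter (r i)
  have ht : ∀ i : R, #P ≤ #(t i) + 1 := fun i => by
    show #P ≤ #(P.filter (r i)) + 1
    have hmiss : #(P.filter fun x => ¬ r i x) ≤ 1 := card_le_one.2 fun x hx y hy => by
      simp only [mem_filter] at hx hy
      by_contra hxy
      exact (hr i i.2 x hx.1 y hy.1 hxy).elim hx.2 hy.2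
    have := card_filter_add_card_filter_not (s := P) (r i)
    omega
  have hall : ∀ s : Finset R, #s ≤ #(s.biUnion t) := by
    intro s
    obtain rfl | ⟨i, hi⟩ := s.eq_empty_or_nonempty
    · simp
    have hi' := card_le_card (subset_biUnion_of_mem t hi)
    have hsR : #s ≤ #R := (card_le_univ s).trans (Fintype.card_coe R).le
    by_cases hs : #s = #P
    · have hsu : s = univ := eq_univ_of_card s (by rw [Fintype.card_coe]; omega)
      refine hs.le.trans (card_le_card fun x hx => ?_)
      obtain ⟨j, hj, hjx⟩ := hcover (by omega) x hx
      exact mem_biUnion.2 ⟨⟨j, hj⟩, hsu ▸ mem_univ _, mem_filter.2 ⟨hx, hjx⟩⟩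
    · have := ht i
      omega
  obtain ⟨f, hf, hft⟩ := (all_card_le_biUnion_card_iff_exists_injective t).1 hall
  refine ⟨fun i => if h : i ∈ R then f ⟨i, h⟩ else Classical.arbitrary α, ?_, ?_, ?_⟩
  · intro i hi
    rw [mem_coe] at hi
    simpa [hi] using (mem_filter.1 (hft ⟨i, hi⟩)).1
  · intro i hi j hj hij
    rw [mem_coe] at hi hj
    exact congrArg Subtype.val (hf (by simpa [hi, hj] using hij))
  · intro i hi
    simpa [hi] using (mem_filter.1 (hft ⟨i, hi⟩)).2

theorem IsKConnected.exists_separator {V : Type} [Fintype V] {G : SimpleGraph V} {k : ℕ}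
    (hk : IsKConnected k G) (hk' : ¬ IsKConnected (k + 1) G) (hcard : k + 1 < Fintype.card V) :
    ∃ S : Finset V, #S = k ∧ ¬ (G.induce (S : Set V)ᶜ).Connected := by
  simp only [IsKConnected, hcard, true_and, not_forall] at hk'
  obtain ⟨S, hS, hdisc⟩ := hk'
  have hkS : k ≤ S.ncard := by
    by_contra! h
    exact hdisc (hk.2 S h)
  refine ⟨S.toFinite.toFinset, ?_, by rwa [Set.Finite.coe_toFinset]⟩
  rw [← Set.ncard_eq_toFinset_card]
  omega

namespace SimpleGraph

variable {V : Type} {G : SimpleGraph V}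

theorem induce_connected_of_forall_adj {s : Set V} {c : V} (hc : c ∈ s)
    (h : ∀ x ∈ s, x ≠ c → G.Adj c x) : (G.induce s).Connected := by
  refine G.induce_connected_of_patches c hc fun {x} hx => ?_
  obtain rfl | hxc := eq_or_ne x c
  · exact ⟨{x}, by simpa using hx, rfl, rfl, Reachable.refl _⟩
  · exact ⟨{c, x}, Set.insert_subset hc (Set.singleton_subset_iff.2 hx), by simp, by simp,
      (G.induce_pair_connected_of_adj (h x hx hxc)).preconnected _ _⟩

theorem adj_of_neighborSet_subset {v x : V} {X : Finset V} (hN : G.neighborSet v ⊆ X)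
    (hX : #X ≤ (G.neighborSet v).ncard) (hx : x ∈ X) : G.Adj v x := by
  have hNX : G.neighborSet v = X :=
    Set.eq_of_subset_of_ncard_le hN (by rwa [Set.ncard_coe_finset]) X.finite_toSet
  rw [← mem_neighborSet, hNX]
  exact hx

theorem adj_or_adj_of_neighborSet_subset [DecidableEq V] {v x y : V} {X : Finset V}
    (hN : G.neighborSet v ⊆ X) (hX : #X ≤ (G.neighborSet v).ncard + 1)
    (hx : x ∈ X) (hy : y ∈ X) (hxy : x ≠ y) : G.Adj v x ∨ G.Adj v y := by
  by_contra! h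
  have hsub : G.neighborSet v ⊆ ((X.erase x).erase y : Finset V) := fun z hz => by
    simp only [coe_erase, Set.mem_sdiff, Set.mem_singleton_iff]
    exact ⟨⟨hN hz, by rintro rfl; exact h.1 hz⟩, by rintro rfl; exact h.2 hz⟩
  have hle := Set.ncard_le_ncard hsub (finite_toSet _)
  rw [Set.ncard_coe_finset, card_erase_of_mem (mem_erase.2 ⟨hxy.symm, hy⟩),
    card_erase_of_mem hx] at hle
  have : 2 ≤ #X := by
    simpa [card_pair hxy] using card_le_card (insert_subset hx (singleton_subset_iff.2 hy))
  omega

theorem hasRootedK4MinorAvoiding_of_extras [DecidableEq V] {T : Finset V} {v : V} (hT : #T = 5)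
    (hvT : v ∈ T) {E : V → Set V} (hET : ∀ r ∈ T.erase v, Disjoint (E r) T)
    (hE : (T.erase v : Set V).Pairwise fun r r' => Disjoint (E r) (E r'))
    (hconn : ∀ r ∈ T.erase v, (G.induce (insert r (E r))).Connected)
    (hadj : (T.erase v : Set V).Pairwise fun r r' =>
      ∃ x ∈ insert r (E r), ∃ y ∈ insert r' (E r'), G.Adj x y) :
    HasRootedK4MinorAvoiding G (T \ {v}) v := by
  have hR : #(T.erase v) = 4 := by rw [card_erase_of_mem hvT, hT]
  let e := (T.erase v).equivFinOfCardEq hR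
  let t : Fin 4 → V := fun i => e.symm i
  have ht : ∀ i, t i ∈ T.erase v := fun i => (e.symm i).2
  have ht_inj : Function.Injective t := Subtype.val_injective.comp e.symm.injective
  have hdisj := Set.pairwise_disjoint_insert (fun x hx => mem_of_mem_erase hx) hET hE
  refine ⟨t, fun i => insert (t i) (E (t i)), ht_inj, ?_, fun i => ?_, fun i => ?_,
    fun i => hconn _ (ht i), fun i j hij => hdisj (ht i) (ht j) (ht_inj.ne hij),
    fun i j hij => hadj (ht i) (ht j) (ht_inj.ne hij)⟩
  · rw [← coe_erase]
    ext x
    exact ⟨by rintro ⟨i, rfl⟩; exact ht i, fun hx => ⟨e ⟨x, hx⟩, by simp [t]⟩⟩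
  · rintro (h | h)
    · exact ne_of_mem_erase (ht i) h.symm
    · exact Set.disjoint_left.1 (hET _ (ht i)) h hvT
  · ext x
    simp only [Set.mem_inter_iff, Set.mem_insert_iff, Set.mem_sdiff, Set.mem_singleton_iff,
      mem_coe]
    constructor
    · rintro ⟨h | h, hxT, -⟩
      · exact h
      · exact absurd hxT (Set.disjoint_left.1 (hET _ (ht i)) h)
    · rintro rfl
      exact ⟨Or.inl rfl, mem_of_mem_erase (ht i), ne_of_mem_erase (ht i)⟩

structure IsSeparation (G : SimpleGraph V) (A S B : Finset V) : Prop where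
  mem_or_mem_or_mem (x : V) : x ∈ A ∨ x ∈ S ∨ x ∈ B
  disjoint_left : Disjoint A S
  disjoint_right : Disjoint B S
  disjoint : Disjoint A B
  not_adj : ∀ a ∈ A, ∀ b ∈ B, ¬ G.Adj a b

theorem exists_isSeparation_of_not_connected [Fintype V] {S : Finset V}
    (hS : #S < Fintype.card V) (h : ¬ (G.induce (S : Set V)ᶜ).Connected) :
    ∃ A B : Finset V, A.Nonempty ∧ B.Nonempty ∧ G.IsSeparation A S B := by
  classical
  obtain ⟨z, -, hz⟩ := exists_mem_notMem_of_card_lt_card (t := univ) (by simpa using hS)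
  have : Nonempty ((S : Set V)ᶜ : Set V) := ⟨⟨z, hz⟩⟩
  obtain ⟨x, y, hxy⟩ : ∃ x y, ¬ (G.induce (S : Set V)ᶜ).Reachable x y := by
    by_contra! hpre
    exact h ⟨hpre⟩
  let A := univ.filter fun a => ∃ ha : a ∉ S, (G.induce (S : Set V)ᶜ).Reachable x ⟨a, ha⟩
  let B := univ.filter fun b => b ∉ S ∧ b ∉ A
  have hxA : (x : V) ∈ A := mem_filter.2 ⟨mem_univ _, x.2, Reachable.refl _⟩
  have hyB : (y : V) ∈ B := by
    refine mem_filter.2 ⟨mem_univ _, y.2, fun hy => ?_⟩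
    obtain ⟨-, _, hxy'⟩ := mem_filter.1 hy
    exact hxy hxy'
  refine ⟨A, B, ⟨x, hxA⟩, ⟨y, hyB⟩, ⟨fun v => ?_, ?_, ?_, ?_, ?_⟩⟩
  · by_cases hvA : v ∈ A
    · exact Or.inl hvA
    by_cases hvS : v ∈ S
    · exact Or.inr (Or.inl hvS)
    · exact Or.inr (Or.inr (mem_filter.2 ⟨mem_univ _, hvS, hvA⟩))
  · exact Finset.disjoint_left.2 fun a ha => (mem_filter.1 ha).2.1
  · exact Finset.disjoint_left.2 fun b hb => (mem_filter.1 hb).2.1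
  · exact Finset.disjoint_right.2 fun b hb => (mem_filter.1 hb).2.2
  · intro a ha b hb hab
    obtain ⟨-, _, hxa⟩ := mem_filter.1 ha
    obtain ⟨-, hbS, hbA⟩ := mem_filter.1 hb
    exact hbA (mem_filter.2 ⟨mem_univ _, hbS, hxa.trans (Adj.reachable (by simpa using hab))⟩)

namespace IsSeparation

variable {A S B T : Finset V} {v : V}

theorem symm (h : G.IsSeparation A S B) : G.IsSeparation B S A :=
  ⟨fun x => by have := h.mem_or_mem_or_mem x; tauto,
    h.disjoint_right, h.disjoint_left, h.disjoint.symm,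
    fun b hb a ha hba => h.not_adj a ha b hb hba.symm⟩

variable [DecidableEq V]

theorem card_inter_add_card_inter_add_card_inter (h : G.IsSeparation A S B) (T : Finset V) :
    #(T ∩ A) + #(T ∩ S) + #(T ∩ B) = #T := by
  have hAS : Disjoint (T ∩ A) (T ∩ S) :=
    h.disjoint_left.mono inter_subset_right inter_subset_right
  have hASB : Disjoint (T ∩ A ∪ T ∩ S) (T ∩ B) := disjoint_union_left.2
    ⟨h.disjoint.mono inter_subset_right inter_subset_right,
      h.disjoint_right.symm.mono inter_subset_right inter_subset_right⟩
  rw [← card_union_of_disjoint hAS, ← card_union_of_disjoint hASB]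
  congr 1
  ext x
  simp only [mem_union, mem_inter]
  have := h.mem_or_mem_or_mem x
  tauto

theorem neighborSet_subset (h : G.IsSeparation A S B) {a : V} (ha : a ∈ A) :
    G.neighborSet a ⊆ ((A ∪ S).erase a : Finset V) := by
  intro x hx
  rw [mem_neighborSet] at hx
  rw [mem_coe, mem_erase, mem_union]
  refine ⟨hx.ne.symm, ?_⟩
  rcases h.mem_or_mem_or_mem x with hxA | hxS | hxB
  · exact Or.inl hxA
  · exact Or.inr hxS
  · exact absurd hx (h.not_adj a ha x hxB)

theorem ncard_neighborSet_lt (h : G.IsSeparation A S B) {a : V} (ha : a ∈ A) :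
    (G.neighborSet a).ncard < #A + #S := by
  have hle := Set.ncard_le_ncard (h.neighborSet_subset ha) (finite_toSet _)
  rw [Set.ncard_coe_finset, card_erase_of_mem (mem_union_left S ha)] at hle
  have := card_union_le A S
  have := card_pos.2 ⟨a, mem_union_left S ha⟩
  omega

theorem exists_pivot (h : G.IsSeparation A S B) (hAT : #A < #T) :
    ∃ v ∈ T, v ∉ A ∧ (v ∈ B ∨ Disjoint T B) := by
  by_cases hTB : ∃ v ∈ T, v ∈ B
  · obtain ⟨v, hvT, hvB⟩ := hTB
    exact ⟨v, hvT, Finset.disjoint_right.1 h.disjoint hvB, Or.inl hvB⟩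
  · obtain ⟨v, hvT, hvA⟩ := exists_mem_notMem_of_card_lt_card hAT
    exact ⟨v, hvT, hvA, Or.inr (Finset.disjoint_left.2 fun x hxT hxB => hTB ⟨x, hxT, hxB⟩)⟩

theorem card_sdiff_eq (h : G.IsSeparation A S B) (hST : #T = #S + 1) (hvT : v ∈ T)
    (hvB : v ∈ B) : #(S \ T) = #(T.erase v ∩ B) + #(T ∩ A) := by
  have hpart := h.card_inter_add_card_inter_add_card_inter T
  have hS := card_sdiff_add_card_inter S T
  have hvTB : v ∈ T ∩ B := mem_inter.2 ⟨hvT, hvB⟩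
  have := card_pos.2 ⟨v, hvTB⟩
  rw [inter_comm] at hS
  rw [erase_inter, card_erase_of_mem hvTB]
  omega

end IsSeparation

variable [DecidableEq V]

structure IsDenseSeparation (G : SimpleGraph V) (A S B : Finset V) : Prop
    extends G.IsSeparation A S B where
  adj_of_mem_left : ∀ a ∈ A, ∀ x ∈ A ∪ S, x ≠ a → G.Adj a x
  adj_or_adj_of_mem_right : ∀ b ∈ B, ∀ x ∈ (B ∪ S).erase b, ∀ y ∈ (B ∪ S).erase b, x ≠ y →
    G.Adj b x ∨ G.Adj b y

theorem IsSeparation.isDenseSeparation {A S B : Finset V} (h : G.IsSeparation A S B) {δ : ℕ}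
    (hdeg : ∀ v, δ ≤ (G.neighborSet v).ncard) (hA : #A + #S ≤ δ + 1) (hB : #B + #S ≤ δ + 2) :
    G.IsDenseSeparation A S B where
  toIsSeparation := h
  adj_of_mem_left a ha x hx hxa := by
    refine adj_of_neighborSet_subset (h.neighborSet_subset ha) ?_ (mem_erase.2 ⟨hxa, hx⟩)
    have := card_union_le A S
    have := hdeg a
    rw [card_erase_of_mem (mem_union_left S ha)]
    omega
  adj_or_adj_of_mem_right b hb x hx y hy hxy := by
    refine adj_or_adj_of_neighborSet_subset (h.symm.neighborSet_subset hb) ?_ hx hy hxy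
    have := card_union_le B S
    have := hdeg b
    rw [card_erase_of_mem (mem_union_left S hb)]
    omega

namespace IsDenseSeparation

variable {A S B T : Finset V} {v : V}

theorem pairwise_exists_adj (hd : G.IsDenseSeparation A S B) {R : Set V} {M : V → Set V}
    {i₀ : V} (hM : R.Pairwise fun r r' => Disjoint (M r) (M r'))
    (hAS : ∀ r ∈ R, ∃ x ∈ M r, x ∈ A ∪ S) (hA : ∀ r ∈ R, r ≠ i₀ → ∃ x ∈ M r, x ∈ A) :
    R.Pairwise fun r r' => ∃ x ∈ M r, ∃ y ∈ M r', G.Adj x y := by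
  have key : ∀ r ∈ R, ∀ r' ∈ R, r ≠ r' → r' ≠ i₀ → ∃ x ∈ M r, ∃ y ∈ M r', G.Adj x y := by
    intro r hr r' hr' hne hr'i
    obtain ⟨x, hx, hxAS⟩ := hAS r hr
    obtain ⟨y, hy, hyA⟩ := hA r' hr' hr'i
    have hxy : x ≠ y := hx.ne_of_notMem (Set.disjoint_right.1 (hM hr hr' hne) hy)
    exact ⟨x, hx, y, hy, (hd.adj_of_mem_left y hyA x hxAS hxy).symm⟩
  intro r hr r' hr' hne
  by_cases hr'i : r' = i₀
  · obtain ⟨x, hx, y, hy, hxy⟩ := key r' hr' r hr hne.symm (hr'i ▸ hne)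
    exact ⟨y, hy, x, hx, hxy.symm⟩
  · exact key r hr r' hr' hne hr'i

theorem hasRootedK4MinorAvoiding_of_matching (hd : G.IsDenseSeparation A S B) (hT : #T = 5)
    (hvT : v ∈ T) {σ α : V → V} {i₀ : V}
    (hσ : Set.MapsTo σ ↑(T.erase v ∩ B) ↑(S \ T)) (hσinj : Set.InjOn σ ↑(T.erase v ∩ B))
    (hσadj : ∀ r ∈ T.erase v ∩ B, G.Adj r (σ r))
    (hα : Set.MapsTo α ↑((T.erase v \ A).erase i₀) ↑(A \ T))
    (hαinj : Set.InjOn α ↑((T.erase v \ A).erase i₀)) :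
    HasRootedK4MinorAvoiding G (T \ {v}) v := by
  set R := T.erase v
  set D := (R \ A).erase i₀
  let E : V → Set V := fun r => {x | (r ∈ B ∧ x = σ r) ∨ (r ∈ D ∧ x = α r)}
  have hσ' : ∀ r ∈ R, r ∈ B → σ r ∈ S ∧ σ r ∉ T := fun r hr hrB =>
    mem_sdiff.1 (hσ (mem_inter.2 ⟨hr, hrB⟩))
  have hα' : ∀ r ∈ D, α r ∈ A ∧ α r ∉ T := fun r hr => mem_sdiff.1 (hα hr)
  have hET : ∀ r ∈ R, Disjoint (E r) T := by
    intro r hr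
    rw [Set.disjoint_left]
    rintro x (⟨hrB, rfl⟩ | ⟨hrD, rfl⟩)
    exacts [(hσ' r hr hrB).2, (hα' r hrD).2]
  have hE : (R : Set V).Pairwise fun r r' => Disjoint (E r) (E r') := by
    intro r hr r' hr' hne
    rw [Set.disjoint_left]
    rintro x (⟨hrB, rfl⟩ | ⟨hrD, rfl⟩) (⟨hrB', h⟩ | ⟨hrD', h⟩)
    · exact hne (hσinj (mem_inter.2 ⟨hr, hrB⟩) (mem_inter.2 ⟨hr', hrB'⟩) h)
    · exact Finset.disjoint_left.1 hd.disjoint_left (h ▸ (hα' r' hrD').1) (hσ' r hr hrB).1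
    · exact Finset.disjoint_left.1 hd.disjoint_left (hα' r hrD).1 (h ▸ (hσ' r' hr' hrB').1)
    · exact hne (hαinj hrD hrD' h)
  have hAS : ∀ r ∈ R, r ∉ B → r ∈ A ∪ S := fun r _ hrB => by
    rcases hd.mem_or_mem_or_mem r with h | h | h
    exacts [mem_union_left _ h, mem_union_right _ h, absurd h hrB]
  refine hasRootedK4MinorAvoiding_of_extras hT hvT hET hE (fun r hr => ?_) ?_
  · by_cases hrB : r ∈ B
    · refine induce_connected_of_forall_adj (c := σ r) (Or.inr (Or.inl ⟨hrB, rfl⟩)) ?_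
      rintro x (rfl | ⟨-, rfl⟩ | ⟨hrD, rfl⟩) hne
      · exact (hσadj x (mem_inter.2 ⟨hr, hrB⟩)).symm
      · exact absurd rfl hne
      · exact (hd.adj_of_mem_left _ (hα' r hrD).1 _
          (mem_union_right _ (hσ' r hr hrB).1) hne.symm).symm
    · refine induce_connected_of_forall_adj (Set.mem_insert r _) ?_
      rintro x (rfl | ⟨hrB', -⟩ | ⟨hrD, rfl⟩) hne
      · exact absurd rfl hne
      · exact absurd hrB' hrB
      · exact (hd.adj_of_mem_left _ (hα' r hrD).1 r (hAS r hr hrB) hne.symm).symm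
  · refine hd.pairwise_exists_adj (i₀ := i₀)
      (Set.pairwise_disjoint_insert (fun x hx => mem_of_mem_erase hx) hET hE)
      (fun r hr => ?_) (fun r hr hri => ?_)
    · by_cases hrB : r ∈ B
      · exact ⟨σ r, Or.inr (Or.inl ⟨hrB, rfl⟩), mem_union_right _ (hσ' r hr hrB).1⟩
      · exact ⟨r, Set.mem_insert r _, hAS r hr hrB⟩
    · by_cases hrA : r ∈ A
      · exact ⟨r, Set.mem_insert r _, hrA⟩
      · have hrD : r ∈ D := mem_erase.2 ⟨hri, mem_sdiff.2 ⟨hr, hrA⟩⟩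
        exact ⟨α r, Or.inr (Or.inr ⟨hrD, rfl⟩), (hα' r hrD).1⟩

theorem hasRootedK4MinorAvoiding_of_forall_not_adj (hd : G.IsDenseSeparation A S B)
    (hT : #T = 5) (hvT : v ∈ T) (hTA : Disjoint T A) {s : V} (hs : s ∈ S \ T)
    (hsB : ∀ r ∈ T.erase v ∩ B, ¬ G.Adj r s) {α : V → V}
    (hα : Set.MapsTo α ↑(T.erase v ∩ S) ↑(A \ T)) (hαinj : Set.InjOn α ↑(T.erase v ∩ S)) :
    HasRootedK4MinorAvoiding G (T \ {v}) v := by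
  set R := T.erase v
  let E : V → Set V := fun r => {x | r ∈ S ∧ x = α r}
  obtain ⟨hsS, hsT⟩ := mem_sdiff.1 hs
  have hsR : ∀ r ∈ R, r ≠ s := fun r hr => (mem_of_mem_erase hr).ne_of_notMem hsT
  have hα' : ∀ r ∈ R, r ∈ S → α r ∈ A ∧ α r ∉ T := fun r hr hrS =>
    mem_sdiff.1 (hα (mem_inter.2 ⟨hr, hrS⟩))
  have hBS : ∀ r ∈ R, r ∈ B ∪ S := fun r hr => by
    rcases hd.mem_or_mem_or_mem r with h | h | h
    · exact absurd h (Finset.disjoint_left.1 hTA (mem_of_mem_erase hr))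
    · exact mem_union_right _ h
    · exact mem_union_left _ h
  -- a root in `B` already misses `s`, so it misses no other vertex of `B ∪ S`
  have hadjB : ∀ r ∈ R, ∀ r' ∈ R, r ∈ B → r ≠ r' → G.Adj r r' := by
    intro r hr r' hr' hrB hne
    have hs' : s ∈ (B ∪ S).erase r := mem_erase.2 ⟨(hsR r hr).symm, mem_union_right _ hsS⟩
    have hr'' : r' ∈ (B ∪ S).erase r := mem_erase.2 ⟨hne.symm, hBS r' hr'⟩
    exact (hd.adj_or_adj_of_mem_right r hrB s hs' r' hr'' (hsR r' hr').symm).resolve_left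
      (hsB r (mem_inter.2 ⟨hr, hrB⟩))
  refine hasRootedK4MinorAvoiding_of_extras hT hvT (E := E) ?_ ?_ (fun r hr => ?_) ?_
  · rintro r hr
    rw [Set.disjoint_left]
    rintro x ⟨hrS, rfl⟩
    exact (hα' r hr hrS).2
  · intro r hr r' hr' hne
    rw [Set.disjoint_left]
    rintro x ⟨hrS, rfl⟩ ⟨hrS', h⟩
    exact hne (hαinj (mem_inter.2 ⟨hr, hrS⟩) (mem_inter.2 ⟨hr', hrS'⟩) h)
  · refine induce_connected_of_forall_adj (Set.mem_insert r _) ?_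
    rintro x (rfl | ⟨hrS, rfl⟩) hne
    · exact absurd rfl hne
    · exact (hd.adj_of_mem_left _ (hα' r hr hrS).1 r (mem_union_right _ hrS) hne.symm).symm
  · intro r hr r' hr' hne
    by_cases hrB : r ∈ B
    · exact ⟨r, Set.mem_insert r _, r', Set.mem_insert r' _, hadjB r hr r' hr' hrB hne⟩
    by_cases hr'B : r' ∈ B
    · exact ⟨r, Set.mem_insert r _, r', Set.mem_insert r' _, (hadjB r' hr' r hr hr'B hne.symm).symm⟩
    have hrS : r ∈ S := (mem_union.1 (hBS r hr)).resolve_left hrB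
    have hr'S : r' ∈ S := (mem_union.1 (hBS r' hr')).resolve_left hr'B
    obtain ⟨hαA, hαT⟩ := hα' r hr hrS
    exact ⟨α r, Or.inr ⟨hrS, rfl⟩, r', Set.mem_insert r' _, hd.adj_of_mem_left _ hαA r'
      (mem_union_right _ hr'S) ((mem_of_mem_erase hr').ne_of_notMem hαT)⟩

theorem exists_matching_or_obstruction (hd : G.IsDenseSeparation A S B) (hST : #T = #S + 1)
    (hvT : v ∈ T) (hvB : v ∈ B ∨ Disjoint T B) :
    (∃ σ : V → V, Set.MapsTo σ ↑(T.erase v ∩ B) ↑(S \ T) ∧ Set.InjOn σ ↑(T.erase v ∩ B) ∧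
      ∀ r ∈ T.erase v ∩ B, G.Adj r (σ r)) ∨
    (Disjoint T A ∧ ∃ s ∈ S \ T, ∀ r ∈ T.erase v ∩ B, ¬ G.Adj r s) := by
  have : Nonempty V := ⟨v⟩
  by_cases hobs : Disjoint T A ∧ ∃ s ∈ S \ T, ∀ r ∈ T.erase v ∩ B, ¬ G.Adj r s
  · exact Or.inr hobs
  have hcount : #(T.erase v ∩ B) ≤ #(S \ T) ∧
      (#(T.erase v ∩ B) = #(S \ T) → (S \ T).Nonempty → Disjoint T A) := by
    rcases hvB with hvB | hTB
    · have := hd.card_sdiff_eq hST hvT hvB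
      exact ⟨by omega, fun heq _ => disjoint_iff_inter_eq_empty.2 (card_eq_zero.1 (by omega))⟩
    · rw [disjoint_iff_inter_eq_empty.1 (hTB.mono_left (erase_subset v T)), card_empty]
      exact ⟨Nat.zero_le _, fun heq hne => absurd heq.symm (card_pos.2 hne).ne'⟩
  refine Or.inl (exists_mapsTo_injOn_of_forall_or G.Adj ?_ hcount.1 fun heq s hs => ?_)
  · intro r hr x hx y hy hxy
    have hrB := (mem_inter.1 hr).2
    have hrS := Finset.disjoint_left.1 hd.disjoint_right hrB
    have hxS := (mem_sdiff.1 hx).1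
    have hyS := (mem_sdiff.1 hy).1
    exact hd.adj_or_adj_of_mem_right r hrB x (mem_erase.2 ⟨hxS.ne_of_notMem hrS,
      mem_union_right _ hxS⟩) y (mem_erase.2 ⟨hyS.ne_of_notMem hrS, mem_union_right _ hyS⟩) hxy
  · by_contra! hno
    exact hobs ⟨hcount.2 heq ⟨s, hs⟩, s, hs, hno⟩

theorem exists_hasRootedK4MinorAvoiding (hd : G.IsDenseSeparation A S B) (hS : #S = 4)
    (hA : #A = 3) (hT : #T = 5) : ∃ v ∈ T, HasRootedK4MinorAvoiding G (T \ {v}) v := by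
  obtain ⟨v, hvT, hvA, hvB⟩ := hd.exists_pivot (by omega : #A < #T)
  have : Nonempty V := ⟨v⟩
  refine ⟨v, hvT, ?_⟩
  rcases hd.exists_matching_or_obstruction (by omega) hvT hvB with
    ⟨σ, hσ, hσinj, hσadj⟩ | ⟨hTA, s, hs, hsB⟩
  · have hR := card_sdiff_add_card_inter (T.erase v) A
    have hAT := card_sdiff_add_card_inter A T
    rw [erase_inter, erase_eq_of_notMem (fun h => hvA (mem_inter.1 h).2), card_erase_of_mem hvT,
      hT] at hR
    rw [inter_comm] at hAT
    obtain ⟨i₀, hi₀⟩ : (T.erase v \ A).Nonempty := card_pos.1 (by omega)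
    obtain ⟨α, hα, hαinj⟩ :=
      exists_mapsTo_injOn_of_card_le (s := (T.erase v \ A).erase i₀) (t := A \ T) (by
        rw [card_erase_of_mem hi₀]
        omega)
    exact hd.hasRootedK4MinorAvoiding_of_matching hT hvT hσ hσinj hσadj hα hαinj
  · obtain ⟨α, hα, hαinj⟩ := exists_mapsTo_injOn_of_card_le (s := T.erase v ∩ S) (t := A \ T) <|
      calc #(T.erase v ∩ S) ≤ #(S.erase s) := card_le_card fun x hx => mem_erase.2
              ⟨(mem_of_mem_erase (mem_inter.1 hx).1).ne_of_notMem (mem_sdiff.1 hs).2,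
                (mem_inter.1 hx).2⟩
        _ = #(A \ T) := by
          rw [card_erase_of_mem (mem_sdiff.1 hs).1, sdiff_eq_self_of_disjoint hTA.symm, hS, hA]
    exact hd.hasRootedK4MinorAvoiding_of_forall_not_adj hT hvT hTA hs hsB hα hαinj

end IsDenseSeparation

end SimpleGraph

theorem rooted_K4_of_four_connected {V : Type} [Fintype V] (G : SimpleGraph V)
    (h7 : 7 ≤ Fintype.card V) (h11 : Fintype.card V ≤ 11)
    (hdeg : ∀ v : V, 6 ≤ (G.neighborSet v).ncard)
    (h4c : IsKConnected 4 G) (h5c : ¬ IsKConnected 5 G)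
    (T : Finset V) (hT : T.card = 5) :
    ∃ v ∈ T, HasRootedK4MinorAvoiding G ((T : Set V) \ {v}) v := by
  classical
  obtain ⟨S, hS, hdisc⟩ := h4c.exists_separator h5c (by omega)
  obtain ⟨A, B, ⟨a, ha⟩, ⟨b, hb⟩, hsep⟩ := exists_isSeparation_of_not_connected (by omega) hdisc
  have hA := (hdeg a).trans_lt (hsep.ncard_neighborSet_lt ha)
  have hB := (hdeg b).trans_lt (hsep.symm.ncard_neighborSet_lt hb)
  have hcard := hsep.card_inter_add_card_inter_add_card_inter univ
  simp only [univ_inter, card_univ] at hcard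
  rcases (by omega : #A = 3 ∨ #B = 3) with hA3 | hB3
  · exact (hsep.isDenseSeparation hdeg (by omega) (by omega)).exists_hasRootedK4MinorAvoiding
      hS hA3 hT
  · exact (hsep.symm.isDenseSeparation hdeg (by omega) (by omega)).exists_hasRootedK4MinorAvoiding
      hS hB3 hT
end

section
/- Let G = K_{3,3,3} (the complete 3-partite graph with parts of size 3), and let e_1, e_2, e_3 be three distinct non-edges of G such that e_1 and e_2 share a common endpoint. Then the graph G + {e_1, e_2, e_3} contains K_8 minus two edges as a minor. -/
open SimpleGraph

/-- The complete 3-partite graph `K_{3,3,3}`. -/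
abbrev K333 : SimpleGraph (Σ _ : Fin 3, Fin 3) :=
  SimpleGraph.completeMultipartiteGraph fun _ => Fin 3

/-!
A non-edge of `K_{3,3,3}` joins two vertices of the same part, so `e₁ = xa`, `e₂ = xb` make `x`
adjacent to the rest of its part `{x, a, b}`, and `e₃ = uv` either completes that part to a
triangle or lies in another part. Contracting an edge between two parts gives a vertex adjacent to
everything else, since every vertex lies outside the part of one of its ends. Choose the contracted
edge and seven further vertices so that only two pairs of these seven remain nonadjacent: for a
triangle, contract an edge between the two other parts and keep two vertices of each; otherwise
contract the third vertex of `u`'s part with a vertex of the remaining part, and the nonadjacent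
pairs are `ab` and two vertices of that remaining part.
-/

theorem IsMinorOf.of_injective_hom {U W V : Type} {F : SimpleGraph U} {H : SimpleGraph W}
    {G : SimpleGraph V} (h : IsMinorOf H G) (f : F →g H) (hf : Function.Injective f) :
    IsMinorOf F G := by
  obtain ⟨B, hne, hconn, hdisj, hadj⟩ := h
  exact ⟨B ∘ f, fun _ => hne _, fun _ => hconn _, fun _ _ h => hdisj (hf.ne h),
    fun _ _ h => hadj _ _ (f.map_adj h)⟩

theorem isMinorOf_contractEdge {V : Type} (G : SimpleGraph V) {x y : V} (hxy : G.Adj x y) :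
    IsMinorOf (contractEdge G x y) G := by
  classical
  set B : {z : V // z ≠ y} → Set V := fun z => if (z : V) = x then {x, y} else {(z : V)}
  have mem_B : ∀ z w, w ∈ B z ↔ w = z ∨ ((z : V) = x ∧ w = y) := by
    intro z w
    by_cases hz : (z : V) = x <;> simp [B, hz]
  refine ⟨B, fun z => ⟨z, (mem_B z z).2 (Or.inl rfl)⟩, fun z => ?_, fun z₁ z₂ hz => ?_, ?_⟩
  · by_cases hz : (z : V) = x
    · rw [show B z = {x, y} from if_pos hz]
      exact induce_pair_connected_of_adj hxy
    · rw [show B z = {(z : V)} from if_neg hz]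
      simp
  · refine Set.disjoint_left.2 fun w h₁ h₂ => ?_
    rw [mem_B] at h₁ h₂
    rcases h₁ with h₁ | ⟨hx₁, h₁⟩ <;> rcases h₂ with h₂ | ⟨hx₂, h₂⟩
    · exact hz (Subtype.ext (h₁.symm.trans h₂))
    · exact z₁.2 (h₁.symm.trans h₂)
    · exact z₂.2 (h₂.symm.trans h₁)
    · exact hz (Subtype.ext (hx₁.trans hx₂.symm))
  · rintro a b ⟨-, hab | ⟨ha, hyb⟩ | ⟨hb, hya⟩⟩
    · exact ⟨a, (mem_B a a).2 (Or.inl rfl), b, (mem_B b b).2 (Or.inl rfl), hab⟩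
    · exact ⟨y, (mem_B a y).2 (Or.inr ⟨ha, rfl⟩), b, (mem_B b b).2 (Or.inl rfl), hyb⟩
    · exact ⟨a, (mem_B a a).2 (Or.inl rfl), y, (mem_B b y).2 (Or.inr ⟨hb, rfl⟩), hya.symm⟩

section Multipartite

variable {ι : Type} {P : ι → Type} {G : SimpleGraph (Σ i, P i)}

/-- `σ o` and `p` form the one branch set that is not a singleton. -/
def IsHubLabelling {W : Type} (σ : W → Σ i, P i) (o : W) (p : Σ i, P i) : Prop :=
  Function.Injective σ ∧ (∀ w, σ w ≠ p) ∧ (σ o).1 ≠ p.1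

theorem contractEdge_adj_of_fst_ne (hK : completeMultipartiteGraph P ≤ G) {x y : Σ i, P i}
    {u v : {z // z ≠ y}} (huv : (u : Σ i, P i).1 ≠ (v : Σ i, P i).1) :
    (contractEdge G x y).Adj u v :=
  ⟨fun h => huv (by rw [h]), Or.inl (hK (by simpa using huv))⟩

theorem contractEdge_merged_adj (hK : completeMultipartiteGraph P ≤ G) {x y : Σ i, P i}
    (hxy : x.1 ≠ y.1) {v : {z // z ≠ y}} (hv : (v : Σ i, P i) ≠ x) :
    (contractEdge G x y).Adj ⟨x, fun h => hxy (by rw [h])⟩ v := by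
  refine ⟨fun h => hv (congrArg Subtype.val h).symm, ?_⟩
  by_cases hpart : x.1 = (v : Σ i, P i).1
  · exact Or.inr (Or.inl ⟨rfl, hK (by simpa [← hpart] using hxy.symm)⟩)
  · exact Or.inl (hK (by simpa using hpart))

theorem isMinorOf_of_isHubLabelling {W : Type} {H : SimpleGraph W}
    (hK : completeMultipartiteGraph P ≤ G) {σ : W → Σ i, P i} {o : W} {p : Σ i, P i}
    (hσ : IsHubLabelling σ o p)
    (hsame : ∀ w w', w ≠ o → w' ≠ o → H.Adj w w' → (σ w).1 = (σ w').1 → G.Adj (σ w) (σ w')) :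
    IsMinorOf H G := by
  obtain ⟨hσ, hp, hop⟩ := hσ
  refine (isMinorOf_contractEdge G (hK (by simpa using hop))).of_injective_hom
    ⟨fun w => ⟨σ w, hp w⟩, fun {w w'} h => ?_⟩ fun w w' h => hσ (congrArg Subtype.val h)
  have hne : σ w ≠ σ w' := hσ.ne h.ne
  rcases eq_or_ne w o with rfl | hwo
  · exact contractEdge_merged_adj hK hop (Ne.symm hne)
  rcases eq_or_ne w' o with rfl | hw'o
  · exact (contractEdge_merged_adj hK hop hne).symm
  by_cases hpart : (σ w).1 = (σ w').1
  · exact ⟨fun h => hne (congrArg Subtype.val h), Or.inl (hsame w w' hwo hw'o h hpart)⟩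
  · exact contractEdge_adj_of_fst_ne hK hpart

end Multipartite

local notation "V₃" => Σ _ : Fin 3, Fin 3

theorem eq_or_eq_or_eq_of_fst_eq {x a b y : V₃} (ha : a.1 = x.1) (hb : b.1 = x.1)
    (hy : y.1 = x.1) (hxa : x ≠ a) (hxb : x ≠ b) (hab : a ≠ b) : y = x ∨ y = a ∨ y = b := by
  obtain ⟨i, x⟩ := x
  obtain ⟨_, a⟩ := a
  obtain ⟨_, b⟩ := b
  obtain ⟨_, y⟩ := y
  subst ha hb hy
  simp only [ne_eq, Sigma.mk.injEq, true_and, heq_eq_eq] at *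
  omega

def branchVerticesOnePart (i x u v : Fin 3) : Fin 8 → V₃ :=
  ![⟨i + 1, 0⟩, ⟨i, x⟩, ⟨i, u⟩, ⟨i, v⟩, ⟨i + 1, 1⟩, ⟨i + 1, 2⟩, ⟨i + 2, 1⟩, ⟨i + 2, 2⟩]

/-- In `Fin 3`, `-(u + v)` is the third element when `u ≠ v`, and `-(i + j)` the third part when
`i ≠ j`. -/
def branchVerticesTwoParts (i j x u v : Fin 3) : Fin 8 → V₃ :=
  ![⟨j, -(u + v)⟩, ⟨i, x⟩, ⟨i, x + 1⟩, ⟨i, x + 2⟩, ⟨j, u⟩, ⟨j, v⟩, ⟨-(i + j), 1⟩, ⟨-(i + j), 2⟩]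

theorem isHubLabelling_branchVerticesOnePart : ∀ i x u v : Fin 3, u ≠ x → v ≠ x → u ≠ v →
    IsHubLabelling (branchVerticesOnePart i x u v) 0 ⟨i + 2, 0⟩ := by
  unfold IsHubLabelling
  decide

theorem branchVerticesOnePart_fst_eq : ∀ i x u v : Fin 3, ∀ k l : Fin 8, k ≠ 0 → l ≠ 0 →
    ((⊤ : SimpleGraph (Fin 8)).deleteEdges {s(4, 5), s(6, 7)}).Adj k l →
    (branchVerticesOnePart i x u v k).1 = (branchVerticesOnePart i x u v l).1 →
    s(k, l) = s(1, 2) ∨ s(k, l) = s(1, 3) ∨ s(k, l) = s(2, 3) := by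
  decide

theorem isHubLabelling_branchVerticesTwoParts : ∀ i j x u v : Fin 3, i ≠ j → u ≠ v →
    IsHubLabelling (branchVerticesTwoParts i j x u v) 0 ⟨-(i + j), 0⟩ := by
  unfold IsHubLabelling
  decide

theorem branchVerticesTwoParts_fst_eq : ∀ i j x u v : Fin 3, i ≠ j →
    ∀ k l : Fin 8, k ≠ 0 → l ≠ 0 →
    ((⊤ : SimpleGraph (Fin 8)).deleteEdges {s(2, 3), s(6, 7)}).Adj k l →
    (branchVerticesTwoParts i j x u v k).1 = (branchVerticesTwoParts i j x u v l).1 →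
    s(k, l) = s(1, 2) ∨ s(k, l) = s(1, 3) ∨ s(k, l) = s(4, 5) := by
  decide

theorem adj_apply_of_sym2_eq {V W : Type} {G : SimpleGraph V} (σ : W → V) {k l a b : W}
    (h : s(k, l) = s(a, b)) (hab : G.Adj (σ a) (σ b)) : G.Adj (σ k) (σ l) := by
  rcases Sym2.eq_iff.1 h with ⟨rfl, rfl⟩ | ⟨rfl, rfl⟩
  exacts [hab, hab.symm]

section K333

variable {G : SimpleGraph V₃}

theorem hasKEqMinor_of_star_of_adj_of_fst_eq (hK : K333 ≤ G) {x u v : V₃}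
    (hstar : ∀ y : V₃, y.1 = x.1 → y ≠ x → G.Adj x y) (hu : u.1 = x.1) (hv : v.1 = x.1)
    (hux : u ≠ x) (hvx : v ≠ x) (huv : G.Adj u v) : HasKEqMinor 8 G := by
  obtain ⟨i, x⟩ := x
  obtain ⟨i₁, u⟩ := u
  obtain ⟨i₂, v⟩ := v
  change i₁ = i at hu
  change i₂ = i at hv
  subst i₁ i₂
  have hσ := isHubLabelling_branchVerticesOnePart i x u v (fun h => hux (h ▸ rfl))
    (fun h => hvx (h ▸ rfl)) (fun h => huv.ne (h ▸ rfl))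
  refine ⟨s(4, 5), s(6, 7), by decide, by decide, by decide,
    isMinorOf_of_isHubLabelling hK hσ ?_⟩
  intro k l hk hl hkl hpart
  rcases branchVerticesOnePart_fst_eq i x u v k l hk hl hkl hpart with h | h | h
  · exact adj_apply_of_sym2_eq _ h (hstar _ rfl hux)
  · exact adj_apply_of_sym2_eq _ h (hstar _ rfl hvx)
  · exact adj_apply_of_sym2_eq _ h huv

theorem hasKEqMinor_of_star_of_adj_of_fst_ne (hK : K333 ≤ G) {x u v : V₃}
    (hstar : ∀ y : V₃, y.1 = x.1 → y ≠ x → G.Adj x y) (hux : u.1 ≠ x.1) (hv : v.1 = u.1)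
    (huv : G.Adj u v) : HasKEqMinor 8 G := by
  obtain ⟨i, x⟩ := x
  obtain ⟨j, u⟩ := u
  obtain ⟨j₁, v⟩ := v
  change j₁ = j at hv
  subst j₁
  have hσ := isHubLabelling_branchVerticesTwoParts i j x u v (Ne.symm hux)
    (fun h => huv.ne (h ▸ rfl))
  refine ⟨s(2, 3), s(6, 7), by decide, by decide, by decide,
    isMinorOf_of_isHubLabelling hK hσ ?_⟩
  intro k l hk hl hkl hpart
  rcases branchVerticesTwoParts_fst_eq i j x u v (Ne.symm hux) k l hk hl hkl hpart with h | h | h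
  · exact adj_apply_of_sym2_eq _ h (hstar _ rfl (by simp [branchVerticesTwoParts]))
  · exact adj_apply_of_sym2_eq _ h (hstar _ rfl (by simp [branchVerticesTwoParts]))
  · exact adj_apply_of_sym2_eq _ h huv

theorem hasKEqMinor_of_star_of_adj (hK : K333 ≤ G) {x u v : V₃}
    (hstar : ∀ y : V₃, y.1 = x.1 → y ≠ x → G.Adj x y) (hv : v.1 = u.1) (hux : u ≠ x)
    (hvx : v ≠ x) (huv : G.Adj u v) : HasKEqMinor 8 G := by
  by_cases hpart : u.1 = x.1
  · exact hasKEqMinor_of_star_of_adj_of_fst_eq hK hstar hpart (hv.trans hpart) hux hvx huv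
  · exact hasKEqMinor_of_star_of_adj_of_fst_ne hK hstar hpart hv huv

end K333

theorem K333_add_three_edges (e₁ e₂ e₃ : Sym2 (Σ _ : Fin 3, Fin 3))
    (h12 : e₁ ≠ e₂) (h13 : e₁ ≠ e₃) (h23 : e₂ ≠ e₃)
    (hne : ∀ e ∈ ({e₁, e₂, e₃} : Set (Sym2 (Σ _ : Fin 3, Fin 3))),
      ¬ e.IsDiag ∧ e ∉ K333.edgeSet)
    (hshare : ∃ x, x ∈ e₁ ∧ x ∈ e₂) :
    HasKEqMinor 8 (K333 ⊔ SimpleGraph.fromEdgeSet {e₁, e₂, e₃}) := by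
  obtain ⟨x, hx₁, hx₂⟩ := hshare
  obtain ⟨a, rfl⟩ := Sym2.mem_iff_exists.1 hx₁
  obtain ⟨b, rfl⟩ := Sym2.mem_iff_exists.1 hx₂
  induction e₃ using Sym2.ind with | h u v => ?_
  set E : Set (Sym2 V₃) := {s(x, a), s(x, b), s(u, v)}
  have nonedge : ∀ y z : V₃, s(y, z) ∈ E → y ≠ z ∧ y.1 = z.1 := fun y z he => by
    simpa using hne _ he
  have added : ∀ y z : V₃, s(y, z) ∈ E → (K333 ⊔ fromEdgeSet E).Adj y z := fun y z he =>
    Or.inr ⟨he, (nonedge y z he).1⟩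
  obtain ⟨hxa, hax⟩ := nonedge x a (by simp [E])
  obtain ⟨hxb, hbx⟩ := nonedge x b (by simp [E])
  obtain ⟨huv, hvu⟩ := nonedge u v (by simp [E])
  have hab : a ≠ b := fun h => h12 (h ▸ rfl)
  have hpart : ∀ y : V₃, y.1 = x.1 → y ≠ x → y = a ∨ y = b := fun y hy hyx =>
    (eq_or_eq_or_eq_of_fst_eq hax.symm hbx.symm hy hxa hxb hab).resolve_left hyx
  have hstar : ∀ y : V₃, y.1 = x.1 → y ≠ x → (K333 ⊔ fromEdgeSet E).Adj x y := by
    intro y hy hyx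
    rcases hpart y hy hyx with rfl | rfl <;> exact added _ _ (by simp [E])
  have hxw : ∀ w : V₃, w.1 = x.1 → w ≠ x → s(x, w) ≠ s(u, v) := fun w hw hwx => by
    rcases hpart w hw hwx with rfl | rfl
    exacts [h13, h23]
  have hux : u ≠ x := by
    rintro rfl
    exact hxw v hvu.symm huv.symm rfl
  have hvx : v ≠ x := by
    rintro rfl
    exact hxw u hvu huv Sym2.eq_swap
  exact hasKEqMinor_of_star_of_adj le_sup_left hstar hvu.symm hux hvx (added u v (by simp [E]))
end

section
/- If G is a minimal counterexample to the statement 'every graph with n ≥ 8 vertices and at least 6n - 20 edges either contains a K_9^= minor or is a (K_8, K_{2,2,2,2,2}, 5)-cockade' (minimal with respect to number of vertices, and with exactly 6n - 20 edges), then the minimum degree of G is at least 7. -/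
open SimpleGraph

/-!
Let `v` have degree `d ≤ 6`. If `|V| = 8`, then `G` has `28` edges, so `G = K₈` is a cockade.
Otherwise `G - v` has `6 (n - 1) - 20 + (6 - d)` edges, so by minimality it has a `K_9^=`
minor (hence so does `G`) or it is a cockade. Cockades on `m` vertices have exactly `6m - 20`
edges, so `d = 6`, and it remains to see that adding a vertex with six neighbours to a cockade
creates a `K_9^=` minor. For `K₈` this is immediate, for `K_{2,2,2,2,2}` two of the neighbours
share a part, and across a glueing along a `5`-clique one contracts a component on one side onto
the new vertex, which then sees the five clique vertices and a sixth neighbour on the other side.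
That the component sees the whole clique is a second induction over cockades: every component
of a cockade minus a `5`-clique is adjacent to every vertex of the clique.
-/

open Function

namespace SimpleGraph

variable {V V' ι : Type} {G : SimpleGraph V} {G' : SimpleGraph V'}

lemma connected_induce_singleton (G : SimpleGraph V) (v : V) : (G.induce {v}).Connected := by
  rw [induce_singleton_eq_top]
  exact connected_top

lemma connected_induce_of_forall_adj {s : Set V} {x : V} (hx : x ∈ s)
    (h : ∀ y ∈ s, y ≠ x → G.Adj x y) : (G.induce s).Connected := by
  rw [connected_iff_exists_forall_reachable]
  refine ⟨⟨x, hx⟩, fun ⟨y, hy⟩ => ?_⟩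
  by_cases hyx : y = x
  · subst hyx
    rfl
  · exact Adj.reachable (h y hy hyx)

lemma Connected.induce_image (f : G →g G') {s : Set V} (h : (G.induce s).Connected) :
    (G'.induce (f '' s)).Connected :=
  h.map ⟨fun x : s => ⟨f x, x.1, x.2, rfl⟩, fun hxy => f.map_adj hxy⟩
    (by rintro ⟨_, x, hx, rfl⟩; exact ⟨⟨x, hx⟩, rfl⟩)

lemma connected_induce_preimage_iff (f : G' ↪g G) {s : Set V} (hs : s ⊆ Set.range f) :
    (G'.induce (f ⁻¹' s)).Connected ↔ (G.induce s).Connected := by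
  let φ := induceHom f.toHom (Set.mapsTo_preimage f s)
  have hφ : Bijective φ := by
    refine ⟨induceHom_injective _ _ f.injective.injOn, ?_⟩
    rintro ⟨x, hx⟩
    obtain ⟨y, rfl⟩ := hs hx
    exact ⟨⟨y, hx⟩, rfl⟩
  exact Iso.connected_iff ⟨Equiv.ofBijective φ hφ, f.map_adj_iff⟩

lemma connected_induce_biUnion {P : SimpleGraph ι} {s : Set ι} (hs : (P.induce s).Connected)
    {B : ι → Set V} (hB : ∀ i ∈ s, (G.induce (B i)).Connected)
    (hadj : ∀ i ∈ s, ∀ j ∈ s, P.Adj i j → ∃ a ∈ B i, ∃ b ∈ B j, G.Adj a b) :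
    (G.induce (⋃ i ∈ s, B i)).Connected := by
  set U := ⋃ i ∈ s, B i
  have hsub (i : s) : B i ⊆ U := Set.subset_biUnion_of_mem i.2
  have hreach (i : s) (a b : B i) : (G.induce U).Reachable ⟨a, hsub i a.2⟩ ⟨b, hsub i b.2⟩ :=
    ((hB i i.2).preconnected a b).map (induceHomOfLE G (hsub i)).toHom
  have hwalk {i j : s} (p : (P.induce s).Walk i j) (a : B i) (b : B j) :
      (G.induce U).Reachable ⟨a, hsub i a.2⟩ ⟨b, hsub j b.2⟩ := by
    induction p with
    | nil => exact hreach _ a b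
    | cons hik _ ih =>
      obtain ⟨a', ha', c, hc, hac⟩ := hadj _ (Subtype.prop _) _ (Subtype.prop _) hik
      have hac' : (G.induce U).Adj ⟨a', hsub _ ha'⟩ ⟨c, hsub _ hc⟩ := hac
      exact (hreach _ a ⟨a', ha'⟩).trans (hac'.reachable.trans (ih ⟨c, hc⟩ b))
  obtain ⟨i⟩ := hs.nonempty
  obtain ⟨a⟩ := (hB i i.2).nonempty
  rw [connected_iff_exists_forall_reachable]
  refine ⟨⟨a, hsub i a.2⟩, ?_⟩
  rintro ⟨b, hb⟩
  obtain ⟨j, hj, hbj⟩ := Set.mem_iUnion₂.mp hb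
  exact hwalk (hs.preconnected i ⟨j, hj⟩).some a ⟨b, hbj⟩

lemma exists_connected_closed_of_mem (G : SimpleGraph V) {S : Set V} {u : V} (hu : u ∈ S) :
    ∃ R ⊆ S, u ∈ R ∧ (G.induce R).Connected ∧ ∀ x ∈ R, ∀ y ∈ S, G.Adj x y → y ∈ R := by
  let c := (G.induce S).connectedComponentMk ⟨u, hu⟩
  refine ⟨Subtype.val '' c.supp, by simp, ⟨_, ConnectedComponent.connectedComponentMk_mem, rfl⟩,
    c.connected_toSimpleGraph.induce_image (Embedding.induce S).toHom, ?_⟩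
  rintro _ ⟨x, hx, rfl⟩ y hy hxy
  exact ⟨⟨y, hy⟩, c.mem_supp_of_adj_mem_supp hx hxy, rfl⟩

lemma Embedding.range_induce (s : Set V) : Set.range (Embedding.induce (G := G) s) = s :=
  Subtype.range_coe

section Separation

variable {A B : Set V}

lemma mk_mem_sym2_or_of_adj (hAB : A ∪ B = Set.univ)
    (hcross : ∀ u ∈ A \ B, ∀ v ∈ B \ A, ¬ G.Adj u v) {x y : V} (h : G.Adj x y) :
    s(x, y) ∈ A.sym2 ∨ s(x, y) ∈ B.sym2 := by
  have hx : x ∈ A ∪ B := hAB ▸ Set.mem_univ x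
  have hy : y ∈ A ∪ B := hAB ▸ Set.mem_univ y
  by_contra! hc
  rw [Set.mk_mem_sym2_iff, Set.mk_mem_sym2_iff] at hc
  by_cases hxA : x ∈ A
  · have hyA : y ∉ A := fun hyA => hc.1 ⟨hxA, hyA⟩
    have hyB : y ∈ B := hy.resolve_left hyA
    exact hcross x ⟨hxA, fun hxB => hc.2 ⟨hxB, hyB⟩⟩ y ⟨hyB, hyA⟩ h
  · have hxB : x ∈ B := hx.resolve_left hxA
    have hyB : y ∉ B := fun hyB => hc.2 ⟨hxB, hyB⟩
    exact hcross y ⟨hy.resolve_right hyB, hyB⟩ x ⟨hxB, hxA⟩ h.symm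

lemma IsClique.subset_or_subset (hAB : A ∪ B = Set.univ)
    (hcross : ∀ u ∈ A \ B, ∀ v ∈ B \ A, ¬ G.Adj u v) {C : Set V} (hC : G.IsClique C) :
    C ⊆ A ∨ C ⊆ B := by
  by_contra! h
  obtain ⟨⟨x, hxC, hxA⟩, ⟨y, hyC, hyB⟩⟩ := Set.not_subset.mp h.1, Set.not_subset.mp h.2
  have hxy : x ≠ y := fun h => hxA (h ▸ (hAB ▸ Set.mem_univ y : y ∈ A ∪ B).resolve_right hyB)
  rcases mk_mem_sym2_or_of_adj hAB hcross (hC hxC hyC hxy) with h | h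
  exacts [hxA h.1, hyB h.2]

lemma edgeSet_eq_union_of_separation (hAB : A ∪ B = Set.univ)
    (hcross : ∀ u ∈ A \ B, ∀ v ∈ B \ A, ¬ G.Adj u v) :
    G.edgeSet = (G.edgeSet ∩ A.sym2) ∪ (G.edgeSet ∩ B.sym2) := by
  ext e
  induction e using Sym2.ind with
  | _ x y =>
    simp only [Set.mem_union, Set.mem_inter_iff, mem_edgeSet]
    constructor
    · intro h
      rcases mk_mem_sym2_or_of_adj hAB hcross h with h' | h'
      exacts [Or.inl ⟨h, h'⟩, Or.inr ⟨h, h'⟩]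
    · rintro (⟨h, -⟩ | ⟨h, -⟩) <;> exact h

lemma ncard_edgeSet_induce (G : SimpleGraph V) (s : Set V) :
    (G.induce s).edgeSet.ncard = (G.edgeSet ∩ s.sym2).ncard := by
  rw [← Set.ncard_image_of_injective _ (Sym2.map.injective Subtype.val_injective)]
  congr 1
  ext e
  induction e using Sym2.ind with
  | _ x y =>
    constructor
    · rintro ⟨e, he, hxy⟩
      induction e using Sym2.ind with
      | _ a b =>
        rw [Sym2.map_mk] at hxy
        rw [← hxy]
        exact ⟨he, a.2, b.2⟩
    · rintro ⟨h, hx, hy⟩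
      exact ⟨s(⟨x, hx⟩, ⟨y, hy⟩), h, rfl⟩

lemma ncard_edgeSet_add_ncard_edgeSet_induce_inter [Finite V] (hAB : A ∪ B = Set.univ)
    (hcross : ∀ u ∈ A \ B, ∀ v ∈ B \ A, ¬ G.Adj u v) :
    G.edgeSet.ncard + (G.induce (A ∩ B)).edgeSet.ncard =
      (G.induce A).edgeSet.ncard + (G.induce B).edgeSet.ncard := by
  rw [ncard_edgeSet_induce, ncard_edgeSet_induce, ncard_edgeSet_induce, Set.sym2_inter,
    Set.inter_inter_distrib_left]
  nth_rw 1 [edgeSet_eq_union_of_separation hAB hcross]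
  exact Set.ncard_union_add_ncard_inter _ _

end Separation

lemma IsClique.ncard_edgeSet_induce {s : Set V} (h : G.IsClique s) (hs : s.Finite) :
    (G.induce s).edgeSet.ncard = s.ncard.choose 2 := by
  classical
  have := hs.fintype
  rw [induce_eq_top.mpr h, ← coe_edgeFinset, Set.ncard_coe_finset,
    card_edgeFinset_top_eq_card_choose_two, Set.ncard_eq_toFinset_card', Set.toFinset_card]

lemma Iso.ncard_edgeSet_eq (e : G ≃g G') : G.edgeSet.ncard = G'.edgeSet.ncard := by
  rw [← Nat.card_coe_set_eq, ← Nat.card_coe_set_eq]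
  exact Nat.card_congr e.mapEdgeSet

lemma eq_top_of_ncard_edgeSet [Fintype V] (h : G.edgeSet.ncard = (Fintype.card V).choose 2) :
    G = ⊤ := by
  classical
  refine edgeSet_inj.mp (Set.eq_of_subset_of_ncard_le (edgeSet_mono le_top) ?_ (Set.toFinite _))
  rw [← coe_edgeFinset, Set.ncard_coe_finset, card_edgeFinset_top_eq_card_choose_two, h]

lemma ncard_edgeSet_induce_compl_singleton_add [Fintype V] (G : SimpleGraph V) (v : V) :
    (G.induce {v}ᶜ).edgeSet.ncard + (G.neighborSet v).ncard = G.edgeSet.ncard := by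
  classical
  rw [← coe_edgeFinset, ← coe_edgeFinset, Set.ncard_coe_finset, Set.ncard_coe_finset,
    card_edgeFinset_induce_compl_singleton, card_edgeFinset_deleteIncidenceSet,
    Set.ncard_eq_toFinset_card', ← neighborFinset_def, card_neighborFinset_eq_degree]
  have := G.degree_le_card_edgeFinset v
  omega

end SimpleGraph

open SimpleGraph

section Minors

variable {V V' U : Type} {G : SimpleGraph V} {G' : SimpleGraph V'}

lemma isMinorOf_of_injective (f : G →g G') (hf : Injective f) : IsMinorOf G G' :=
  ⟨fun v => {f v}, fun _ => Set.singleton_nonempty _, fun _ => connected_induce_singleton _ _,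
    fun _ _ hvw => Set.disjoint_singleton.mpr (hf.ne hvw),
    fun v w h => ⟨f v, rfl, f w, rfl, f.map_adj h⟩⟩

lemma isMinorOf_induce (G : SimpleGraph V) (s : Set V) : IsMinorOf (G.induce s) G :=
  isMinorOf_of_injective (Embedding.induce s).toHom Subtype.val_injective

lemma IsMinorOf.trans {F : SimpleGraph U} (h₁ : IsMinorOf F G) (h₂ : IsMinorOf G G') :
    IsMinorOf F G' := by
  obtain ⟨B, hne, hconn, hdisj, hadj⟩ := h₁
  obtain ⟨B', hne', hconn', hdisj', hadj'⟩ := h₂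
  refine ⟨fun u => ⋃ v ∈ B u, B' v, fun u => ?_,
    fun u => connected_induce_biUnion (hconn u) (fun v _ => hconn' v)
      (fun v _ w _ h => hadj' v w h), fun u₁ u₂ hu => ?_, fun u₁ u₂ h => ?_⟩
  · obtain ⟨v, hv⟩ := hne u
    obtain ⟨x, hx⟩ := hne' v
    exact ⟨x, Set.mem_biUnion hv hx⟩
  · simp only [Set.disjoint_iUnion₂_left, Set.disjoint_iUnion₂_right]
    exact fun v hv w hw => hdisj' ((hdisj hu).ne_of_mem hw hv)
  · obtain ⟨v, hv, w, hw, hvw⟩ := hadj u₁ u₂ h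
    obtain ⟨a, ha, b, hb, hab⟩ := hadj' v w hvw
    exact ⟨a, Set.mem_biUnion hv ha, b, Set.mem_biUnion hw hb, hab⟩

lemma HasKEqMinor.mono {t : ℕ} (h : HasKEqMinor t G) (hG : IsMinorOf G G') :
    HasKEqMinor t G' := by
  obtain ⟨e₁, e₂, hne, h₁, h₂, hm⟩ := h
  exact ⟨e₁, e₂, hne, h₁, h₂, hm.trans hG⟩

lemma hasKEqMinor_of_deleteEdges_le [Fintype V] {t : ℕ} (hV : Fintype.card V = t)
    {e₁ e₂ : Sym2 V} (hne : e₁ ≠ e₂) (h₁ : ¬ e₁.IsDiag) (h₂ : ¬ e₂.IsDiag)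
    (hG : (⊤ : SimpleGraph V).deleteEdges {e₁, e₂} ≤ G) : HasKEqMinor t G := by
  let σ := (Fintype.equivFinOfCardEq hV).symm
  have hmap (e : Sym2 V) (i j : Fin t) : s(σ i, σ j) = e ↔ s(i, j) = e.map σ.symm := by
    rw [← (Sym2.map.injective σ.symm.injective).eq_iff, Sym2.map_mk]
    simp
  refine ⟨e₁.map σ.symm, e₂.map σ.symm, (Sym2.map.injective σ.symm.injective).ne hne,
    by rwa [Sym2.isDiag_map σ.symm.injective], by rwa [Sym2.isDiag_map σ.symm.injective],
    isMinorOf_of_injective ⟨σ, fun {i j} hij => hG ?_⟩ σ.injective⟩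
  simp only [deleteEdges_adj, top_adj, Set.mem_insert_iff, Set.mem_singleton_iff,
    hmap] at hij ⊢
  exact ⟨σ.injective.ne hij.1, hij.2⟩

instance [DecidableRel G.Adj] {N : Set V} [DecidablePred (· ∈ N)] :
    DecidableRel (addVertex G N).Adj
  | some u, some w => inferInstanceAs (Decidable (G.Adj u w))
  | some u, none => inferInstanceAs (Decidable (u ∈ N))
  | none, some w => inferInstanceAs (Decidable (w ∈ N))
  | none, none => isFalse id

lemma isMinorOf_addVertex (f : G →g G') (hf : Injective f) {N : Set V} {N' : Set V'}
    (hN : Set.MapsTo f N N') : IsMinorOf (addVertex G N) (addVertex G' N') := by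
  refine isMinorOf_of_injective ⟨Option.map f, ?_⟩ (Option.map_injective hf)
  rintro (_ | a) (_ | b) h
  exacts [h.elim, hN h, hN h, f.map_adj h]

lemma isMinorOf_addVertex_neighborSet (G : SimpleGraph V) (v : V) :
    IsMinorOf (addVertex (G.induce {v}ᶜ) (Subtype.val ⁻¹' G.neighborSet v)) G := by
  refine isMinorOf_of_injective ⟨fun o => o.elim v Subtype.val, ?_⟩ ?_
  · rintro (_ | a) (_ | b) h
    exacts [h.elim, h, G.adj_symm h, h]
  · rintro (_ | a) (_ | b) h
    exacts [rfl, (b.2 h.symm).elim, (a.2 h).elim, congrArg some (Subtype.ext h)]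

/-- The branch set of the added vertex is `R` together with the added vertex itself. -/
lemma isMinorOf_addVertex_induce {A R N : Set V} {N' : Set A} (hRA : Disjoint R A)
    (hR : (G.induce R).Connected) (hRN : (R ∩ N).Nonempty)
    (hN' : ∀ a ∈ N', (a : V) ∈ N ∨ ∃ r ∈ R, G.Adj r a) :
    IsMinorOf (addVertex (G.induce A) N') (addVertex G N) := by
  let someHom : G →g addVertex G N := ⟨some, id⟩
  obtain ⟨r₀, hr₀R, hr₀N⟩ := hRN
  have hsees : ∀ a ∈ N', ∃ x ∈ insert none (some '' R), (addVertex G N).Adj x (some a) := by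
    intro a ha
    rcases hN' a ha with h | ⟨r, hr, h⟩
    exacts [⟨none, Set.mem_insert _ _, h⟩, ⟨some r, Set.mem_insert_of_mem _ ⟨r, hr, rfl⟩, h⟩]
  have hsome (a : A) : some a.1 ∉ insert none (some '' R) := by
    rintro (h | ⟨r, hr, h⟩)
    exacts [Option.some_ne_none _ h, hRA.ne_of_mem hr a.2 (Option.some_injective _ h)]
  refine ⟨fun o => o.elim (insert none (some '' R)) fun a => {some a.1}, ?_, ?_, ?_, ?_⟩
  · rintro (_ | a)
    exacts [Set.insert_nonempty _ _, Set.singleton_nonempty _]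
  · rintro (_ | a)
    · rw [Set.insert_eq]
      exact connected_induce_union (connected_induce_singleton _ _).preconnected
        (hR.induce_image someHom).preconnected rfl ⟨r₀, hr₀R, rfl⟩ hr₀N
    · exact connected_induce_singleton _ _
  · rintro (_ | a) (_ | b) hab
    · exact (hab rfl).elim
    · exact Set.disjoint_singleton_right.mpr (hsome b)
    · exact Set.disjoint_singleton_left.mpr (hsome a)
    · refine Set.disjoint_singleton.mpr fun h => hab ?_
      exact congrArg some (Subtype.ext (Option.some_injective _ h))
  · rintro (_ | a) (_ | b) h
    · exact h.elim
    · obtain ⟨x, hx, hxb⟩ := hsees b h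
      exact ⟨x, hx, some b, rfl, hxb⟩
    · obtain ⟨x, hx, hxa⟩ := hsees a h
      exact ⟨some a, rfl, x, hx, (addVertex G N).adj_symm hxa⟩
    · exact ⟨some a, rfl, some b, rfl, h⟩

end Minors

section Cockades

variable {V W α β : Type} {G : SimpleGraph V} {H₁ : SimpleGraph α} {H₂ : SimpleGraph β}
  {k t : ℕ}

/-- Glueing along a `k`-clique adds the vertex counts minus `k` and the edge counts minus
`C(k,2)`, which preserves `|E| + c = a |V|` exactly because `C(k,2) + c = a k`. -/
theorem IsCockade.ncard_edgeSet_add {a c : ℕ} (h₁ : H₁.edgeSet.ncard + c = a * Nat.card α)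
    (h₂ : H₂.edgeSet.ncard + c = a * Nat.card β) (hk : k.choose 2 + c = a * k)
    (hG : IsCockade H₁ H₂ k G) [hV : Finite V] : G.edgeSet.ncard + c = a * Nat.card V := by
  revert hV
  induction hG with
  | base₁ G e | base₂ G e =>
    obtain ⟨e⟩ := e
    intro _
    rwa [Iso.ncard_edgeSet_eq e, Nat.card_congr e.toEquiv]
  | @glue U G A B hAB _ _ hABk hABc hcross _ _ ihA ihB =>
    intro _
    have hE := ncard_edgeSet_add_ncard_edgeSet_induce_inter hAB hcross (G := G)
    rw [hABc.ncard_edgeSet_induce (Set.toFinite _), hABk] at hE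
    have hV := Set.ncard_union_add_ncard_inter A B
    rw [hAB, Set.ncard_univ, hABk] at hV
    have hA := @ihA inferInstance
    have hB := @ihB inferInstance
    rw [Nat.card_coe_set_eq] at hA hB
    have haV : a * Nat.card U + a * k = a * A.ncard + a * B.ncard := by
      rw [← mul_add, ← mul_add, hV]
    omega

namespace SimpleGraph

/-- A component of `G - C` is encoded as a nonempty connected set `D` disjoint from `C` and
closed under adjacency outside `C`. -/
def CliqueComponentsFull (k : ℕ) (G : SimpleGraph V) : Prop :=
  ∀ ⦃C D : Set V⦄, G.IsClique C → C.ncard = k → Disjoint C D → D.Nonempty →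
    (G.induce D).Connected → (∀ d ∈ D, ∀ x ∉ C, G.Adj d x → x ∈ D) →
    ∀ c ∈ C, ∃ d ∈ D, G.Adj d c

namespace CliqueComponentsFull

lemma forall_exists_adj_of_embedding {H : SimpleGraph W} (h : CliqueComponentsFull k H)
    (f : H ↪g G) {C D : Set V} (hCf : C ⊆ Set.range f) (hDf : D ⊆ Set.range f)
    (hC : G.IsClique C) (hCk : C.ncard = k) (hCD : Disjoint C D) (hD : D.Nonempty)
    (hDconn : (G.induce D).Connected)
    (hDclosed : ∀ d ∈ D, ∀ x ∈ Set.range f, x ∉ C → G.Adj d x → x ∈ D) :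
    ∀ c ∈ C, ∃ d ∈ D, G.Adj d c := by
  intro c hc
  obtain ⟨c, rfl⟩ := hCf hc
  obtain ⟨d, hd⟩ := hD
  obtain ⟨d, rfl⟩ := hDf hd
  obtain ⟨e, he, hec⟩ := h (C := f ⁻¹' C) (D := f ⁻¹' D)
    (fun a ha b hb hab => f.map_adj_iff.mp (hC ha hb (f.injective.ne hab)))
    (by rwa [Set.ncard_preimage_of_injective_subset_range f.injective hCf])
    (hCD.preimage f) ⟨d, hd⟩ ((connected_induce_preimage_iff f hDf).mpr hDconn)
    (fun a ha x hx hax => hDclosed _ ha _ ⟨x, rfl⟩ hx (f.map_adj_iff.mpr hax)) c hc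
  exact ⟨f e, he, f.map_adj_iff.mpr hec⟩

lemma of_iso {G' : SimpleGraph W} (e : G ≃g G') (h : CliqueComponentsFull k G') :
    CliqueComponentsFull k G :=
  fun _ _ hC hCk hCD hD hDconn hDclosed =>
    h.forall_exists_adj_of_embedding e.symm.toEmbedding (fun x _ => e.symm.surjective x)
      (fun x _ => e.symm.surjective x) hC hCk hCD hD hDconn fun d hd x _ => hDclosed d hd x

/-- If `D` meets `A`, a component of `G[D ∩ A]` is a component of `G[A] - C`, so it sees `C`.
Otherwise `D` is a component of `G[B]` minus the glueing clique, so it sees that whole clique;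
then the glueing clique lies in `C`, and equals it by cardinality. -/
lemma forall_exists_adj_of_separation (hk : 0 < k) {A B : Set V} (hAB : A ∪ B = Set.univ)
    (hABk : (A ∩ B).ncard = k) (hABc : G.IsClique (A ∩ B))
    (hA : CliqueComponentsFull k (G.induce A)) (hB : CliqueComponentsFull k (G.induce B))
    {C D : Set V} (hCA : C ⊆ A) (hC : G.IsClique C) (hCk : C.ncard = k) (hCD : Disjoint C D)
    (hD : D.Nonempty) (hDconn : (G.induce D).Connected)
    (hDclosed : ∀ d ∈ D, ∀ x ∉ C, G.Adj d x → x ∈ D) :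
    ∀ c ∈ C, ∃ d ∈ D, G.Adj d c := by
  by_cases hDA : (D ∩ A).Nonempty
  · obtain ⟨a, ha⟩ := hDA
    obtain ⟨R, hRDA, haR, hR, hRclosed⟩ := exists_connected_closed_of_mem G ha
    intro c hc
    obtain ⟨d, hd, hdc⟩ := hA.forall_exists_adj_of_embedding (Embedding.induce A)
      (by rwa [Embedding.range_induce])
      (by rw [Embedding.range_induce]; exact fun x hx => (hRDA hx).2) hC hCk
      (hCD.mono_right fun x hx => (hRDA hx).1) ⟨a, haR⟩ hR
      (fun d hd x hxA hxC hdx => hRclosed d hd x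
        ⟨hDclosed d (hRDA hd).1 x hxC hdx, by rwa [Embedding.range_induce] at hxA⟩ hdx) c hc
    exact ⟨d, (hRDA hd).1, hdc⟩
  · have hDBA : D ⊆ B \ A := fun x hx =>
      ⟨(hAB ▸ Set.mem_univ x : x ∈ A ∪ B).resolve_left fun hxA => hDA ⟨x, hx, hxA⟩,
        fun hxA => hDA ⟨x, hx, hxA⟩⟩
    have hfull := hB.forall_exists_adj_of_embedding (Embedding.induce B)
      (by rw [Embedding.range_induce]; exact Set.inter_subset_right)
      (by rw [Embedding.range_induce]; exact fun x hx => (hDBA hx).1) hABc hABk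
      (Set.disjoint_left.mpr fun x hx hxD => (hDBA hxD).2 hx.1) hD hDconn
      (fun d hd x hxB hxAB hdx => hDclosed d hd x (fun hxC => hxAB
        ⟨hCA hxC, by rwa [Embedding.range_induce] at hxB⟩) hdx)
    have hABC : A ∩ B ⊆ C := fun c hc => by
      by_contra hcC
      obtain ⟨d, hd, hdc⟩ := hfull c hc
      exact (hDBA (hDclosed d hd c hcC hdc)).2 hc.1
    have hCAB : A ∩ B = C := Set.eq_of_subset_of_ncard_le hABC (by rw [hCk, hABk])
      (Set.finite_of_ncard_pos (hCk ▸ hk))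
    exact hCAB ▸ hfull

lemma of_separation (hk : 0 < k) {A B : Set V} (hAB : A ∪ B = Set.univ)
    (hcross : ∀ u ∈ A \ B, ∀ v ∈ B \ A, ¬ G.Adj u v) (hABk : (A ∩ B).ncard = k)
    (hABc : G.IsClique (A ∩ B)) (hA : CliqueComponentsFull k (G.induce A))
    (hB : CliqueComponentsFull k (G.induce B)) : CliqueComponentsFull k G := by
  intro C D hC
  rcases hC.subset_or_subset hAB hcross with hCA | hCB
  · exact forall_exists_adj_of_separation hk hAB hABk hABc hA hB hCA hC
  · rw [Set.inter_comm] at hABk hABc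
    exact forall_exists_adj_of_separation hk (Set.union_comm A B ▸ hAB) hABk hABc hB hA hCB hC

end CliqueComponentsFull

lemma cliqueComponentsFull_top (k : ℕ) : CliqueComponentsFull k (⊤ : SimpleGraph V) :=
  fun _ _ _ _ hCD hD _ _ _ hc => ⟨hD.some, hD.some_mem, (hCD.ne_of_mem hc hD.some_mem).symm⟩

/-- `C` meets every part. If the vertex `d` of the component lies in the part of `c`, take the
vertex `c'` of `C` in another part and any other vertex `y` of that part: `y ∉ C` and `y` is
adjacent to `d`, hence lies in the component, and `y` is adjacent to `c`. -/
lemma cliqueComponentsFull_completeMultipartiteGraph {ι : Type} [Finite ι] [Nontrivial ι]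
    {α : ι → Type} [∀ i, Nontrivial (α i)] :
    CliqueComponentsFull (Nat.card ι) (completeMultipartiteGraph α) := by
  intro C D hC hCk _ hD _ hDclosed c hc
  obtain ⟨d, hd⟩ := hD
  by_cases hdc : d.1 = c.1
  swap
  · exact ⟨d, hd, hdc⟩
  have hinj : Set.InjOn Sigma.fst C := fun x hx y hy hxy => by
    by_contra hne
    exact hC hx hy hne hxy
  have hsurj : Sigma.fst '' C = Set.univ :=
    Set.eq_of_subset_of_ncard_le (Set.subset_univ _)
      (by rw [hinj.ncard_image, hCk, Set.ncard_univ]) (Set.toFinite _)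
  obtain ⟨j, hj⟩ := exists_ne c.1
  obtain ⟨c', hc', rfl⟩ : j ∈ Sigma.fst '' C := hsurj ▸ Set.mem_univ j
  obtain ⟨b, hb⟩ := exists_ne c'.2
  have hy : (⟨c'.1, b⟩ : Σ i, α i) ∉ C := fun hyC =>
    hb (eq_of_heq (Sigma.mk.inj_iff.mp ((hinj hyC hc' rfl).trans (Sigma.eta c').symm)).2)
  refine ⟨⟨c'.1, b⟩, hDclosed d hd _ hy ?_, hj⟩
  change d.1 ≠ c'.1
  rw [hdc]
  exact hj.symm

lemma cliqueComponentsFull_K22222 : CliqueComponentsFull 5 K22222 := by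
  simpa using cliqueComponentsFull_completeMultipartiteGraph (ι := Fin 5) (α := fun _ => Fin 2)

end SimpleGraph

theorem IsCockade.cliqueComponentsFull (hk : 0 < k) (h₁ : CliqueComponentsFull k H₁)
    (h₂ : CliqueComponentsFull k H₂) (hG : IsCockade H₁ H₂ k G) : CliqueComponentsFull k G := by
  induction hG with
  | base₁ G e => exact h₁.of_iso e.some
  | base₂ G e => exact h₂.of_iso e.some
  | glue G A B hAB _ _ hABk hABc hcross _ _ ihA ihB =>
    exact .of_separation hk hAB hcross hABk hABc ihA ihB

namespace SimpleGraph

def AddVertexHasKEqMinor (t m : ℕ) (G : SimpleGraph V) : Prop :=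
  ∀ N : Set V, N.ncard = m → HasKEqMinor t (addVertex G N)

namespace AddVertexHasKEqMinor

variable {m : ℕ}

lemma of_embedding {H : SimpleGraph W} (h : AddVertexHasKEqMinor t m H) (f : H ↪g G)
    {N : Set V} (hN : N ⊆ Set.range f) (hNm : N.ncard = m) : HasKEqMinor t (addVertex G N) :=
  (h (f ⁻¹' N) (by rwa [Set.ncard_preimage_of_injective_subset_range f.injective hN])).mono
    (isMinorOf_addVertex f.toHom f.injective (Set.mapsTo_preimage f N))

lemma of_iso {G' : SimpleGraph W} (e : G ≃g G') (h : AddVertexHasKEqMinor t m G') :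
    AddVertexHasKEqMinor t m G :=
  fun _ hN => h.of_embedding e.symm.toEmbedding (fun x _ => e.symm.surjective x) hN

/-- If the new vertex has neighbours `w ∈ A \ B` and `u ∈ B \ A`, contract the component of `u`
in `G[B \ A]` onto it: it then sees `w` and the whole glueing clique, `k + 1` vertices of `A`. -/
lemma of_separation (hk : 0 < k) {A B : Set V} (hAB : A ∪ B = Set.univ)
    (hcross : ∀ u ∈ A \ B, ∀ v ∈ B \ A, ¬ G.Adj u v) (hABk : (A ∩ B).ncard = k)
    (hABc : G.IsClique (A ∩ B)) (hfull : CliqueComponentsFull k G)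
    (hA : AddVertexHasKEqMinor t (k + 1) (G.induce A))
    (hB : AddVertexHasKEqMinor t (k + 1) (G.induce B)) :
    AddVertexHasKEqMinor t (k + 1) G := by
  intro N hN
  by_cases hNA : N ⊆ A
  · exact hA.of_embedding (Embedding.induce A) (by rwa [Embedding.range_induce]) hN
  by_cases hNB : N ⊆ B
  · exact hB.of_embedding (Embedding.induce B) (by rwa [Embedding.range_induce]) hN
  obtain ⟨w, hwN, hwB⟩ := Set.not_subset.mp hNB
  obtain ⟨u, huN, huA⟩ := Set.not_subset.mp hNA
  have hmem (x : V) : x ∈ A ∪ B := hAB ▸ Set.mem_univ x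
  have hwA : w ∈ A := (hmem w).resolve_right hwB
  obtain ⟨R, hR, huR, hRconn, hRclosed⟩ :=
    exists_connected_closed_of_mem G (S := B \ A) ⟨(hmem u).resolve_left huA, huA⟩
  have hsees : ∀ c ∈ A ∩ B, ∃ r ∈ R, G.Adj r c := by
    refine hfull hABc hABk (Set.disjoint_left.mpr fun x hx hxR => (hR hxR).2 hx.1) ⟨u, huR⟩
      hRconn fun d hd x hx hdx => hRclosed d hd x ⟨?_, ?_⟩ hdx
    · by_contra hxB
      exact hcross x ⟨(hmem x).resolve_right hxB, hxB⟩ d (hR hd) (G.adj_symm hdx)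
    · exact fun hxA => hcross x ⟨hxA, fun hxB => hx ⟨hxA, hxB⟩⟩ d (hR hd) (G.adj_symm hdx)
  have hN' : (Subtype.val ⁻¹' insert w (A ∩ B) : Set A).ncard = k + 1 := by
    rw [Set.ncard_preimage_of_injective_subset_range Subtype.val_injective
        (by rw [Subtype.range_coe]; exact Set.insert_subset hwA Set.inter_subset_left),
      Set.ncard_insert_of_notMem (fun h => hwB h.2) (Set.finite_of_ncard_pos (hABk ▸ hk)),
      hABk]
  refine (hA _ hN').mono (isMinorOf_addVertex_induce
    (Set.disjoint_left.mpr fun x hx => (hR hx).2) hRconn ⟨u, huR, huN⟩ ?_)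
  rintro a (ha | ha)
  exacts [Or.inl (ha ▸ hwN), Or.inr (hsees a ha)]

end AddVertexHasKEqMinor

lemma addVertexHasKEqMinor_top [Fintype V] {m : ℕ} (hV : Fintype.card V = m + 2) :
    AddVertexHasKEqMinor (m + 3) m (⊤ : SimpleGraph V) := by
  intro N hN
  have hNc : Nᶜ.ncard = 2 := by
    have := Set.ncard_add_ncard_compl N
    rw [Nat.card_eq_fintype_card, hV] at this
    omega
  obtain ⟨a, b, hab, hNab⟩ := Set.ncard_eq_two.mp hNc
  have hN (x : V) (hx : x ≠ a) (hx' : x ≠ b) : x ∈ N := by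
    by_contra h
    have : x ∈ ({a, b} : Set V) := hNab ▸ h
    simp_all
  refine hasKEqMinor_of_deleteEdges_le (e₁ := s(none, some a)) (e₂ := s(none, some b))
    (by simp [hV]) (by simp [hab]) (by simp) (by simp) ?_
  rintro (_ | x) (_ | y) ⟨hxy, hne⟩
  · exact (hxy rfl).elim
  · exact hN y (by rintro rfl; simp at hne) (by rintro rfl; simp at hne)
  · exact hN x (by rintro rfl; simp at hne) (by rintro rfl; simp at hne)
  · exact fun h => hxy (congrArg some h)

/-- Contract the new vertex into `⟨0, 0⟩`, and `⟨1, 0⟩` into `⟨2, 1⟩`: both merged vertices and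
`⟨0, 1⟩` become universal, so only the pairs of parts `3` and `4` remain non-adjacent. -/
lemma hasKEqMinor_addVertex_K22222_part_zero :
    HasKEqMinor 9 (addVertex K22222 {p | p.1 = 0}) := by
  let B : Fin 9 → Finset (Option (Σ _ : Fin 5, Fin 2)) :=
    ![{none, some ⟨0, 0⟩}, {some ⟨0, 1⟩}, {some ⟨1, 0⟩, some ⟨2, 1⟩}, {some ⟨1, 1⟩},
      {some ⟨2, 0⟩}, {some ⟨3, 0⟩}, {some ⟨3, 1⟩}, {some ⟨4, 0⟩}, {some ⟨4, 1⟩}]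
  refine ⟨s(5, 6), s(7, 8), by decide, by decide, by decide, fun i => B i, ?_, ?_, ?_, ?_⟩
  · have h : ∀ i, (B i).Nonempty := by decide
    exact fun i => Finset.coe_nonempty.mpr (h i)
  · have h : ∀ i, ∃ x ∈ B i, ∀ y ∈ B i, y ≠ x → (addVertex K22222 {p | p.1 = 0}).Adj x y := by
      decide
    intro i
    obtain ⟨x, hx, hxB⟩ := h i
    exact connected_induce_of_forall_adj hx hxB
  · have h : ∀ i j : Fin 9, i ≠ j → Disjoint (B i) (B j) := by decide
    exact fun i j hij => Finset.disjoint_coe.mpr (h i j hij)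
  · have h : ∀ i j : Fin 9, i ≠ j → s(i, j) ≠ s(5, 6) → s(i, j) ≠ s(7, 8) →
        ∃ a ∈ B i, ∃ b ∈ B j, (addVertex K22222 {p | p.1 = 0}).Adj a b := by decide
    intro i j hij
    simp only [deleteEdges_adj, top_adj, Set.mem_insert_iff, Set.mem_singleton_iff,
      not_or] at hij
    exact h i j hij.1 hij.2.1 hij.2.2

/-- By pigeonhole, six neighbours of the new vertex cover some part of `K_{2,2,2,2,2}`;
permuting the parts reduces to the case of part `0`. -/
lemma addVertexHasKEqMinor_K22222 : AddVertexHasKEqMinor 9 6 K22222 := by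
  intro N hN
  obtain ⟨⟨i, a⟩, ha, ⟨j, b⟩, hb, hab, hij⟩ :=
    Set.exists_ne_map_eq_of_ncard_lt_of_maps_to (s := N) (t := Set.univ) (f := Sigma.fst)
      (by simp [hN]) fun _ _ => Set.mem_univ _
  obtain rfl : i = j := hij
  have hpart (c : Fin 2) : (⟨i, c⟩ : Σ _ : Fin 5, Fin 2) ∈ N := by
    have hfin2 : ∀ a b c : Fin 2, a ≠ b → c = a ∨ c = b := by decide
    rcases hfin2 a b c (fun h => hab (h ▸ rfl)) with rfl | rfl
    exacts [ha, hb]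
  let φ : K22222 →g K22222 :=
    ⟨fun p => ⟨Equiv.swap 0 i p.1, p.2⟩, fun h => (Equiv.swap 0 i).injective.ne h⟩
  refine hasKEqMinor_addVertex_K22222_part_zero.mono (isMinorOf_addVertex φ ?_ ?_)
  · rintro ⟨p, c⟩ ⟨q, d⟩ h
    change (⟨Equiv.swap 0 i p, c⟩ : Σ _ : Fin 5, Fin 2) = ⟨Equiv.swap 0 i q, d⟩ at h
    simp only [Sigma.mk.injEq, EmbeddingLike.apply_eq_iff_eq, heq_eq_eq] at h
    rw [h.1, h.2]
  · rintro ⟨p, c⟩ (rfl : p = 0)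
    change (⟨Equiv.swap 0 i 0, c⟩ : Σ _ : Fin 5, Fin 2) ∈ N
    rw [Equiv.swap_apply_left]
    exact hpart c

end SimpleGraph

theorem IsCockade.addVertexHasKEqMinor (hk : 0 < k) (hfull₁ : CliqueComponentsFull k H₁)
    (hfull₂ : CliqueComponentsFull k H₂) (h₁ : AddVertexHasKEqMinor t (k + 1) H₁)
    (h₂ : AddVertexHasKEqMinor t (k + 1) H₂) (hG : IsCockade H₁ H₂ k G) :
    AddVertexHasKEqMinor t (k + 1) G := by
  induction hG with
  | base₁ G e => exact h₁.of_iso e.some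
  | base₂ G e => exact h₂.of_iso e.some
  | glue G A B hAB hAB' hBA hABk hABc hcross hGA hGB ihA ihB =>
    exact .of_separation hk hAB hcross hABk hABc
      ((IsCockade.glue G A B hAB hAB' hBA hABk hABc hcross hGA hGB).cliqueComponentsFull
        hk hfull₁ hfull₂) ihA ihB

lemma Cockade85.ncard_edgeSet [Finite V] (hG : Cockade85 G) :
    G.edgeSet.ncard + 20 = 6 * Nat.card V := by
  refine hG.ncard_edgeSet_add ?_ ?_ (by decide)
  · rw [← coe_edgeFinset, Set.ncard_coe_finset, Nat.card_eq_fintype_card]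
    decide
  · rw [← coe_edgeFinset, Set.ncard_coe_finset, Nat.card_eq_fintype_card]
    decide

lemma Cockade85.addVertexHasKEqMinor (hG : Cockade85 G) : AddVertexHasKEqMinor 9 6 G :=
  IsCockade.addVertexHasKEqMinor (by norm_num) (cliqueComponentsFull_top 5)
    cliqueComponentsFull_K22222 (addVertexHasKEqMinor_top (by simp)) addVertexHasKEqMinor_K22222 hG

end Cockades

theorem min_counterexample_min_degree {V : Type} [Fintype V] (G : SimpleGraph V)
    (h8 : 8 ≤ Fintype.card V)
    (hE : G.edgeSet.ncard = 6 * Fintype.card V - 20)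
    (hNoMinor : ¬ HasKEqMinor 9 G)
    (hNotCockade : ¬ Cockade85 G)
    (hMin : ∀ (W : Type) (instW : Fintype W) (H : SimpleGraph W),
      Fintype.card W < Fintype.card V → 8 ≤ Fintype.card W →
      6 * Fintype.card W - 20 ≤ H.edgeSet.ncard →
      HasKEqMinor 9 H ∨ Cockade85 H) :
    ∀ v : V, 7 ≤ (G.neighborSet v).ncard := by
  classical
  intro v
  by_contra! hdeg
  have h9 : 9 ≤ Fintype.card V := by
    by_contra! h
    have hV : Fintype.card V = 8 := by omega
    have hG : G = ⊤ := eq_top_of_ncard_edgeSet (by rw [hE, hV]; rfl)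
    exact hNotCockade (.base₁ G ⟨hG ▸ Iso.completeGraph (Fintype.equivFinOfCardEq hV)⟩)
  have hcard : Fintype.card ({v}ᶜ : Set V) = Fintype.card V - 1 := by
    rw [Fintype.card_compl_set, Set.card_singleton]
  have hsplit := ncard_edgeSet_induce_compl_singleton_add G v
  rcases hMin _ inferInstance (G.induce {v}ᶜ) (by omega) (by omega) (by omega) with h | h
  · exact hNoMinor (h.mono (isMinorOf_induce G _))
  · have hcount := h.ncard_edgeSet
    rw [Nat.card_eq_fintype_card, hcard] at hcount
    refine hNoMinor ((h.addVertexHasKEqMinor _ ?_).mono (isMinorOf_addVertex_neighborSet G v))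
    rw [Set.ncard_preimage_of_injective_subset_range Subtype.val_injective
      (by rw [Subtype.range_coe]; exact fun _ h => (G.ne_of_adj h).symm)]
    omega
end
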